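/- arXiv:1812.05791 — 7 statements merged into one kernel-verified Lean document; each statement's English description precedes it below -/
import Mathlib

section
/- If $I_1$ is an $n_1$-absorbing ideal and $I_2$ is an $n_2$-absorbing ideal of a commutative ring $R$, then $I_1 \cap I_2$ is an $(n_1 + n_2)$-absorbing ideal of $R$. -/
open Ideal Finset MvPolynomial

/-- `I` is an `N`-absorbing ideal: whenever a product of `N+1` elements lies in `I`,
the product of some `N` of them (omitting one factor) lies in `I`. -/
def IsNAbsorbing {R : Type*} [CommRing R] (I : Ideal R) (N : ℕ) : Prop :=
  ∀ x : Fin (N + 1) → R, (∏ i, x i) ∈ I →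
    ∃ j, (∏ i ∈ Finset.univ.erase j, x i) ∈ I

/-- `ω(I)`: the least `N` such that `I` is `N`-absorbing. -/
noncomputable def omegaAbs {R : Type*} [CommRing R] (I : Ideal R) : ℕ :=
  sInf {N | IsNAbsorbing I N}

/-! An `n`-absorbing ideal is `m`-absorbing for every `m ≥ n`: merge two factors of a product of
`m + 2` elements into one. Iterating, a product of at least `n` elements lying in `I` has a
subproduct of exactly `n` factors in `I`. If the product of `x₀, …, x_{n₁+n₂}` lies in
`I₁ ∩ I₂`, pick such subproducts of `n₁` factors in `I₁` and `n₂` factors in `I₂`; some index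
`j` is used by neither, and the product omitting `x_j` is a multiple of both. -/

theorem Finset.prod_update_mul_erase {ι M : Type*} [DecidableEq ι] [CommMonoid M]
    {s : Finset ι} {b c : ι} (hb : b ∈ s) (hc : c ∈ s) (hbc : b ≠ c) (x : ι → M) :
    ∏ i ∈ s.erase c, Function.update x b (x b * x c) i = ∏ i ∈ s, x i := by
  rw [prod_update_of_mem (mem_erase.2 ⟨hbc, hb⟩), sdiff_singleton_eq_erase, mul_right_comm,
    mul_prod_erase _ _ (mem_erase.2 ⟨hbc, hb⟩), mul_comm, mul_prod_erase _ _ hc]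

namespace IsNAbsorbing

variable {R : Type*} [CommRing R] {I : Ideal R} {n : ℕ}

theorem exists_mem_prod_erase_mem {ι : Type*} [DecidableEq ι] (h : IsNAbsorbing I n)
    {s : Finset ι} (hs : s.card = n + 1) {x : ι → R} (hx : ∏ i ∈ s, x i ∈ I) :
    ∃ a ∈ s, ∏ i ∈ s.erase a, x i ∈ I := by
  obtain ⟨f, rfl⟩ : ∃ f : Fin (n + 1) ↪ ι, univ.map f = s :=
    ⟨(s.equivFinOfCardEq hs).symm.toEmbedding.trans (.subtype _), by
      simp [← map_map, map_univ_equiv, attach_map_val]⟩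
  rw [prod_map] at hx
  obtain ⟨j, hj⟩ := h (x ∘ f) hx
  exact ⟨f j, mem_map_of_mem f (mem_univ j), by rwa [← map_erase, prod_map]⟩

theorem succ (h : IsNAbsorbing I n) : IsNAbsorbing I (n + 1) := by
  intro x hx
  set c := Fin.last (n + 1)
  have h0c : (0 : Fin (n + 2)) ≠ c := Fin.last_pos.ne
  obtain ⟨a, ha, hya⟩ := h.exists_mem_prod_erase_mem (s := univ.erase c)
    (by simp) (x := Function.update x 0 (x 0 * x c))
    (by rwa [prod_update_mul_erase (mem_univ _) (mem_univ _) h0c])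
  rw [erase_right_comm] at hya
  by_cases ha0 : a = 0
  · subst ha0
    rw [prod_update_of_notMem (fun h ↦ by simp at h)] at hya
    exact ⟨0, Ideal.mem_of_dvd _ (prod_dvd_prod_of_subset _ _ _ (erase_subset _ _)) hya⟩
  · refine ⟨a, ?_⟩
    rwa [prod_update_mul_erase (by simp [Ne.symm ha0]) (by simpa using (ne_of_mem_erase ha).symm)
      h0c] at hya

theorem mono {m : ℕ} (h : IsNAbsorbing I n) (hnm : n ≤ m) : IsNAbsorbing I m := by
  induction m, hnm using Nat.le_induction with
  | base => exact h
  | succ m _ ih => exact ih.succ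

theorem exists_subset_card_eq_prod_mem {ι : Type*} [DecidableEq ι] (h : IsNAbsorbing I n)
    {s : Finset ι} {x : ι → R} (hn : n ≤ s.card) (hs : ∏ i ∈ s, x i ∈ I) :
    ∃ t ⊆ s, t.card = n ∧ ∏ i ∈ t, x i ∈ I := by
  induction s using Finset.strongInduction with
  | H s ih =>
    obtain hn | hn := hn.eq_or_lt
    · exact ⟨s, subset_rfl, hn.symm, hs⟩
    obtain ⟨m, hm⟩ := Nat.exists_eq_add_of_lt hn
    obtain ⟨a, ha, has⟩ := (h.mono (Nat.le_add_right n m)).exists_mem_prod_erase_mem hm hs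
    obtain ⟨t, hts, ht⟩ := ih _ (erase_ssubset ha) (by rw [card_erase_of_mem ha]; omega) has
    exact ⟨t, hts.trans (erase_subset a s), ht⟩

end IsNAbsorbing

theorem inter_isNAbsorbing {R : Type*} [CommRing R] (I₁ I₂ : Ideal R) (n₁ n₂ : ℕ)
    (h₁ : IsNAbsorbing I₁ n₁) (h₂ : IsNAbsorbing I₂ n₂) :
    IsNAbsorbing (I₁ ⊓ I₂) (n₁ + n₂) := by
  intro x hx
  obtain ⟨A, -, hA, hxA⟩ := h₁.exists_subset_card_eq_prod_mem (by simp; omega) (Submodule.mem_inf.1 hx).1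
  obtain ⟨B, -, hB, hxB⟩ := h₂.exists_subset_card_eq_prod_mem (by simp; omega) (Submodule.mem_inf.1 hx).2
  obtain ⟨j, -, hj⟩ := exists_mem_notMem_of_card_lt_card (s := A ∪ B) (t := univ)
    (by grw [card_union_le]; simp; omega)
  have hsub {C : Finset (Fin (n₁ + n₂ + 1))} (hC : C ⊆ A ∪ B) : C ⊆ univ.erase j :=
    fun i hi ↦ mem_erase.2 ⟨fun h ↦ hj (h ▸ hC hi), mem_univ i⟩
  exact ⟨j, Submodule.mem_inf.2 ⟨Ideal.mem_of_dvd _ (prod_dvd_prod_of_subset _ _ _ (hsub subset_union_left)) hxA,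
    Ideal.mem_of_dvd _ (prod_dvd_prod_of_subset _ _ _ (hsub subset_union_right)) hxB⟩⟩
end

section
/- Let $R$ be a UFD, $p \in R$ an irreducible element, $I$ an ideal of $R$, and $n \in \mathbb{N}$. Then $I$ is an $n$-absorbing ideal of $R$ if and only if $pI$ is an $(n+1)$-absorbing ideal of $R$. -/
open Ideal Finset MvPolynomial

/-! If `p` is prime, a product lying in `pI` has a factor divisible by `p`; moving that `p` out
turns an `(n+1)`-fold product in `pI` into one in `I`, and conversely. Going up, `I` being
`n`-absorbing lets us omit any factor other than the one that absorbed `p`. Going down, apply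
`(n+1)`-absorption of `pI` to `(p, x₀, …, xₙ)`: either we may omit some `xₘ`, or `∏ xᵢ ∈ pI`
and we strip one more power of `p` from the product; as `∏ xᵢ ≠ 0` has finite `p`-multiplicity,
this descent stops. If `∏ xᵢ = 0`, omit any factor other than a vanishing one. -/

open Function

section ProdUpdate

variable {ι M : Type*} [CommMonoid M] [DecidableEq ι]

lemma Finset.prod_erase_eq_prod_update_one (s : Finset ι) (x : ι → M) (j : ι) :
    ∏ i ∈ s.erase j, x i = ∏ i ∈ s, update x j 1 i := by
  by_cases hj : j ∈ s
  · rw [prod_update_of_mem hj, one_mul, sdiff_singleton_eq_erase]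
  · rw [erase_eq_of_notMem hj, prod_update_of_notMem hj]

lemma Finset.prod_update_mul_of_mem {s : Finset ι} {j : ι} (hj : j ∈ s) (x : ι → M) (a : M) :
    ∏ i ∈ s, update x j (a * x j) i = a * ∏ i ∈ s, x i := by
  rw [prod_update_of_mem hj, ← mul_prod_erase s x hj, sdiff_singleton_eq_erase, mul_assoc]

lemma Finset.prod_eq_mul_prod_update_of_mem {s : Finset ι} {j : ι} (hj : j ∈ s) {x : ι → M}
    {a y : M} (hx : x j = a * y) : ∏ i ∈ s, x i = a * ∏ i ∈ s, update x j y i := by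
  rw [prod_update_of_mem hj, ← mul_prod_erase s x hj, sdiff_singleton_eq_erase, hx, mul_assoc]

lemma Finset.prod_update_dvd_prod (s : Finset ι) {x : ι → M} {j : ι} {a y : M}
    (hx : x j = a * y) : ∏ i ∈ s, update x j y i ∣ ∏ i ∈ s, x i :=
  prod_dvd_prod_of_dvd _ _ fun i _ => by
    rcases eq_or_ne i j with rfl | hij
    · simp [hx]
    · simp [hij]

end ProdUpdate

lemma Fin.prod_erase_succAbove {M : Type*} [CommMonoid M] {n : ℕ} (x : Fin (n + 1) → M)
    (j : Fin (n + 1)) (m : Fin n) :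
    ∏ i ∈ univ.erase (j.succAbove m), x i = x j * ∏ i ∈ univ.erase m, x (j.succAbove i) := by
  rw [prod_erase_eq_prod_update_one, prod_erase_eq_prod_update_one,
    Fin.prod_univ_succAbove _ j, update_of_ne (Fin.succAbove_ne j m).symm]
  change _ = x j * ∏ i, update (x ∘ j.succAbove) m 1 i
  rw [← update_comp_eq_of_injective x Fin.succAbove_right_injective]
  rfl

lemma Finset.exists_prod_erase_eq_zero {ι M : Type*} [Fintype ι] [DecidableEq ι] [Nontrivial ι]
    [CommMonoidWithZero M] {x : ι → M} {i : ι} (hi : x i = 0) :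
    ∃ j, ∏ k ∈ univ.erase j, x k = 0 := by
  obtain ⟨j, hj⟩ := exists_ne i
  exact ⟨j, prod_eq_zero (mem_erase.2 ⟨hj.symm, mem_univ i⟩) hi⟩

section Absorbing

variable {R : Type*} [CommRing R] {p : R} {I : Ideal R} {n : ℕ}

lemma IsNAbsorbing.exists_mul_prod_erase_mem (hI : IsNAbsorbing I n) (c : R)
    (w : Fin (n + 1) → R) (h : c * ∏ i, w i ∈ I) : ∃ m, c * ∏ i ∈ univ.erase m, w i ∈ I := by
  obtain ⟨m, hm⟩ := hI (update w 0 (c * w 0)) (by rwa [prod_update_mul_of_mem (mem_univ 0)])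
  refine ⟨m, ?_⟩
  rcases eq_or_ne m 0 with rfl | hm0
  · rw [prod_update_of_notMem (notMem_erase 0 univ)] at hm
    exact I.mul_mem_left c hm
  · rwa [prod_update_mul_of_mem (mem_erase.2 ⟨hm0.symm, mem_univ 0⟩)] at hm

lemma IsNAbsorbing.exists_ne_prod_erase_mem (hI : IsNAbsorbing I n) {z : Fin (n + 2) → R}
    (hz : ∏ i, z i ∈ I) (j : Fin (n + 2)) : ∃ k ≠ j, ∏ i ∈ univ.erase k, z i ∈ I := by
  obtain ⟨m, hm⟩ := hI.exists_mul_prod_erase_mem (z j) (fun i => z (j.succAbove i))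
    (by rwa [← Fin.prod_univ_succAbove])
  exact ⟨j.succAbove m, Fin.succAbove_ne j m, by rwa [Fin.prod_erase_succAbove]⟩

variable [IsDomain R]

lemma Ideal.mul_mem_span_singleton_mul_iff (hp : p ≠ 0) {a : R} :
    p * a ∈ span {p} * I ↔ a ∈ I := by
  refine ⟨fun h => ?_, fun ha => mul_mem_mul (mem_span_singleton_self p) ha⟩
  obtain ⟨b, hb, hba⟩ := mem_span_singleton_mul.1 h
  rwa [← mul_left_cancel₀ hp hba]

lemma Prime.exists_update_prod_mem_of_prod_mem_span_singleton_mul {ι : Type*} [Fintype ι]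
    [DecidableEq ι] (hp : Prime p) {x : ι → R} (hx : ∏ i, x i ∈ span {p} * I) :
    ∃ j y, x j = p * y ∧ ∏ i, update x j y i ∈ I := by
  have hdvd : p ∣ ∏ i, x i := mem_span_singleton.1 (Ideal.mul_le_left hx)
  obtain ⟨j, -, y, hy⟩ := hp.exists_mem_finset_dvd hdvd
  refine ⟨j, y, hy, ?_⟩
  rwa [← mul_mem_span_singleton_mul_iff hp.ne_zero,
    ← prod_eq_mul_prod_update_of_mem (mem_univ j) hy]

lemma IsNAbsorbing.span_singleton_mul (hp : Prime p) (hI : IsNAbsorbing I n) :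
    IsNAbsorbing (span {p} * I) (n + 1) := by
  intro x hx
  obtain ⟨j, y, hy, hz⟩ := hp.exists_update_prod_mem_of_prod_mem_span_singleton_mul hx
  obtain ⟨k, hkj, hk⟩ := hI.exists_ne_prod_erase_mem hz j
  refine ⟨k, ?_⟩
  rw [prod_eq_mul_prod_update_of_mem (mem_erase.2 ⟨hkj.symm, mem_univ j⟩) hy]
  exact (mul_mem_span_singleton_mul_iff hp.ne_zero).2 hk

lemma IsNAbsorbing.exists_prod_erase_mem_or_prod_mem_of_span_singleton_mul (hp : p ≠ 0)
    (h : IsNAbsorbing (span {p} * I) (n + 1)) {x : Fin (n + 1) → R} (hx : ∏ i, x i ∈ I) :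
    (∃ m, ∏ i ∈ univ.erase m, x i ∈ I) ∨ ∏ i, x i ∈ span {p} * I := by
  obtain ⟨J, hJ⟩ := h (Fin.cons p x) (by rwa [Fin.prod_cons, mul_mem_span_singleton_mul_iff hp])
  simp only [prod_erase_eq_prod_update_one] at hJ ⊢
  cases J using Fin.cases with
  | zero => exact Or.inr (by simpa [Fin.update_cons_zero] using hJ)
  | succ m =>
    rw [← Fin.cons_update, Fin.prod_cons, mul_mem_span_singleton_mul_iff hp] at hJ
    exact Or.inl ⟨m, hJ⟩

lemma IsNAbsorbing.exists_prod_erase_mem_of_not_pow_dvd (hp : Prime p)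
    (h : IsNAbsorbing (span {p} * I) (n + 1)) (k : ℕ) {x : Fin (n + 1) → R}
    (hk : ¬p ^ k ∣ ∏ i, x i) (hx : ∏ i, x i ∈ I) : ∃ m, ∏ i ∈ univ.erase m, x i ∈ I := by
  induction k generalizing x with
  | zero => exact absurd (pow_zero p ▸ one_dvd _) hk
  | succ k ih =>
    refine (h.exists_prod_erase_mem_or_prod_mem_of_span_singleton_mul hp.ne_zero hx).elim id
      fun hpx => ?_
    obtain ⟨j, y, hy, hz⟩ := hp.exists_update_prod_mem_of_prod_mem_span_singleton_mul hpx
    have hk' : ¬p ^ k ∣ ∏ i, update x j y i := fun hdvd => hk <| by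
      rw [prod_eq_mul_prod_update_of_mem (mem_univ j) hy, pow_succ']
      exact mul_dvd_mul_left p hdvd
    obtain ⟨m, hm⟩ := ih hk' hz
    exact ⟨m, I.mem_of_dvd (prod_update_dvd_prod _ hy) hm⟩

lemma IsNAbsorbing.of_span_singleton_mul [WfDvdMonoid R] (hp : Prime p) (hn : 1 ≤ n)
    (h : IsNAbsorbing (span {p} * I) (n + 1)) : IsNAbsorbing I n := by
  intro x hx
  by_cases h0 : ∏ i, x i = 0
  · obtain ⟨i, -, hi⟩ := prod_eq_zero_iff.1 h0
    have : Nontrivial (Fin (n + 1)) := Fin.nontrivial_iff_two_le.2 (by omega)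
    obtain ⟨j, hj⟩ := exists_prod_erase_eq_zero hi
    exact ⟨j, hj ▸ I.zero_mem⟩
  · obtain ⟨k, hk⟩ := FiniteMultiplicity.of_prime_left hp h0
    exact h.exists_prod_erase_mem_of_not_pow_dvd hp (k + 1) hk hx

end Absorbing

theorem nAbsorbing_iff_mul_irreducible {R : Type*} [CommRing R] [IsDomain R]
    [UniqueFactorizationMonoid R] (p : R) (hp : Irreducible p) (I : Ideal R)
    (n : ℕ) (hn : 1 ≤ n) :
    IsNAbsorbing I n ↔ IsNAbsorbing (Ideal.span {p} * I) (n + 1) :=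
  ⟨IsNAbsorbing.span_singleton_mul hp.prime, IsNAbsorbing.of_span_singleton_mul hp.prime hn⟩
end

section
/- Let $R = k[x_1,\ldots,x_n]$ be a polynomial ring over a field and $f$ a monomial of degree $d$. Then the principal ideal $fR$ is $d$-absorbing but not $(d-1)$-absorbing (for $d \ge 1$); i.e., $\omega(fR) = \deg(f)$. -/
open Ideal Finset MvPolynomial

/-!
Write the monomial as a product of `d` prime variables. If it divides a product of `d + 1`
factors, each prime in turn divides some factor, so after peeling off the primes one at a time
the monomial already divides the product of at most `d` of the factors, and some factor can be
dropped. Conversely, splitting the `d` primes into `N + 1 ≤ d` nonempty groups writes the monomial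
as a product of `N + 1` non-units; dropping any one of them gives a proper divisor.
-/

section PrimeProducts

variable {M₀ : Type*} [CommMonoidWithZero M₀]

lemma Finset.prod_update_mul_eq_prod {ι : Type*} [DecidableEq ι] {s : Finset ι} {j : ι}
    (hj : j ∈ s) (x : ι → M₀) (p y : M₀) (hxj : x j = p * y) :
    p * ∏ i ∈ s, Function.update x j y i = ∏ i ∈ s, x i := by
  rw [← Finset.mul_prod_erase s _ hj, ← Finset.mul_prod_erase s _ hj, hxj,
    Function.update_self, mul_assoc]
  congr 2
  exact Finset.prod_congr rfl fun i hi => Function.update_of_ne (Finset.ne_of_mem_erase hi) _ _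

lemma Multiset.exists_subset_card_le_prod_dvd_of_prime [IsCancelMulZero M₀] {ι : Type*}
    (P : Multiset M₀) (hP : ∀ p ∈ P, Prime p) (s : Finset ι) (x : ι → M₀)
    (hdvd : P.prod ∣ ∏ i ∈ s, x i) :
    ∃ t ⊆ s, t.card ≤ Multiset.card P ∧ P.prod ∣ ∏ i ∈ t, x i := by
  classical
  induction P using Multiset.induction generalizing x with
  | empty => exact ⟨∅, Finset.empty_subset s, by simp, by simp⟩
  | cons p P ih =>
    have hp : Prime p := hP p (Multiset.mem_cons_self p P)
    rw [Multiset.prod_cons] at hdvd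
    obtain ⟨j, hjs, y, hxj⟩ := hp.exists_mem_finset_dvd (dvd_of_mul_right_dvd hdvd)
    have hrest : P.prod ∣ ∏ i ∈ s, Function.update x j y i := by
      rw [← Finset.prod_update_mul_eq_prod hjs x p y hxj] at hdvd
      exact (mul_dvd_mul_iff_left hp.ne_zero).1 hdvd
    obtain ⟨t, hts, htcard, htdvd⟩ :=
      ih (fun q hq => hP q (Multiset.mem_cons_of_mem hq)) _ hrest
    refine ⟨insert j t, Finset.insert_subset hjs hts, ?_, ?_⟩
    · rw [Multiset.card_cons]
      exact (Finset.card_insert_le j t).trans (Nat.succ_le_succ htcard)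
    · rw [Multiset.prod_cons,
        ← Finset.prod_update_mul_eq_prod (Finset.mem_insert_self j t) x p y hxj]
      exact mul_dvd_mul_left p (htdvd.trans (Finset.prod_dvd_prod_of_subset _ _ _
        (Finset.subset_insert j t)))

lemma Multiset.exists_fin_prod_not_isUnit_eq_prod (P : Multiset M₀) (hP : ∀ p ∈ P, Prime p)
    (N : ℕ) (hN : N < Multiset.card P) :
    ∃ x : Fin (N + 1) → M₀, (∀ j, ¬ IsUnit (x j)) ∧ ∏ j, x j = P.prod := by
  induction N generalizing P with
  | zero =>
    obtain ⟨p, hp⟩ := Multiset.card_pos_iff_exists_mem.1 hN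
    refine ⟨fun _ => P.prod, fun _ hu => (hP p hp).not_isUnit ?_, by simp⟩
    exact isUnit_of_dvd_unit (Multiset.dvd_prod hp) hu
  | succ N ih =>
    obtain ⟨p, hp⟩ := Multiset.card_pos_iff_exists_mem.1 (Nat.zero_lt_of_lt hN)
    obtain ⟨P', rfl⟩ := Multiset.exists_cons_of_mem hp
    rw [Multiset.card_cons] at hN
    obtain ⟨x, hx, hprod⟩ :=
      ih P' (fun q hq => hP q (Multiset.mem_cons_of_mem hq)) (Nat.lt_of_succ_lt_succ hN)
    refine ⟨Fin.cons p x, Fin.cases (hP p hp).not_isUnit hx, ?_⟩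
    rw [Fin.prod_cons, hprod, Multiset.prod_cons]

end PrimeProducts

section Absorbing

variable {R : Type*} [CommRing R] [IsDomain R]

lemma isNAbsorbing_span_multiset_prod {P : Multiset R} (hP : ∀ p ∈ P, Prime p) :
    IsNAbsorbing (Ideal.span {P.prod}) (Multiset.card P) := by
  intro x hx
  obtain ⟨t, -, htcard, htdvd⟩ :=
    P.exists_subset_card_le_prod_dvd_of_prime hP univ x (Ideal.mem_span_singleton.1 hx)
  obtain ⟨j, -, hjt⟩ := Finset.exists_mem_notMem_of_card_lt_card
    (s := t) (t := univ) (by rw [card_univ, Fintype.card_fin]; omega)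
  refine ⟨j, Ideal.mem_span_singleton.2 (htdvd.trans (prod_dvd_prod_of_subset _ _ _ ?_))⟩
  exact fun i hi => mem_erase.2 ⟨ne_of_mem_of_not_mem hi hjt, mem_univ i⟩

lemma not_isNAbsorbing_span_of_prod_eq {f : R} (hf : f ≠ 0) {N : ℕ} {x : Fin (N + 1) → R}
    (hx : ∀ j, ¬ IsUnit (x j)) (hprod : ∏ j, x j = f) :
    ¬ IsNAbsorbing (Ideal.span {f}) N := by
  intro habs
  obtain ⟨j, hj⟩ := habs x (hprod ▸ Ideal.mem_span_singleton_self f)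
  rw [Ideal.mem_span_singleton, ← hprod, ← mul_prod_erase univ x (mem_univ j)] at hj
  have hrest : ∏ i ∈ univ.erase j, x i ≠ 0 := by
    rw [← hprod, ← mul_prod_erase univ x (mem_univ j)] at hf
    exact right_ne_zero_of_mul hf
  exact hx j (isUnit_of_dvd_one ((mul_dvd_mul_iff_right hrest).1 (by rwa [one_mul])))

lemma not_isNAbsorbing_span_multiset_prod {P : Multiset R} (hP : ∀ p ∈ P, Prime p) {N : ℕ}
    (hN : N < Multiset.card P) : ¬ IsNAbsorbing (Ideal.span {P.prod}) N := by
  obtain ⟨x, hx, hprod⟩ := P.exists_fin_prod_not_isUnit_eq_prod hP N hN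
  exact not_isNAbsorbing_span_of_prod_eq
    (Multiset.prod_ne_zero fun h0 => (hP 0 h0).ne_zero rfl) hx hprod

end Absorbing

lemma omegaAbs_eq_of_isNAbsorbing {R : Type*} [CommRing R] {I : Ideal R} {d : ℕ}
    (hd : IsNAbsorbing I d) (hlt : ∀ N < d, ¬ IsNAbsorbing I N) : omegaAbs I = d :=
  le_antisymm (Nat.sInf_le hd) (le_csInf ⟨d, hd⟩ fun N hN => not_lt.1 fun h => hlt N h hN)

lemma MvPolynomial.prod_X_pow_eq_multiset_prod {σ R : Type*} [CommSemiring R] [Fintype σ]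
    (a : σ → ℕ) :
    ∏ i, (X i : MvPolynomial σ R) ^ a i = (∑ i, Multiset.replicate (a i) (X i)).prod := by
  simp only [Multiset.prod_sum, Multiset.prod_replicate]

theorem omega_principal_monomial {k : Type*} [Field k] (n : ℕ) (a : Fin n → ℕ)
    (d : ℕ) (hd : d = ∑ i, a i) (h1 : 1 ≤ d) :
    IsNAbsorbing (Ideal.span {∏ i, (X i : MvPolynomial (Fin n) k) ^ a i}) d ∧
      ¬ IsNAbsorbing (Ideal.span {∏ i, (X i : MvPolynomial (Fin n) k) ^ a i}) (d - 1) ∧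
      omegaAbs (Ideal.span {∏ i, (X i : MvPolynomial (Fin n) k) ^ a i}) = d := by
  set P : Multiset (MvPolynomial (Fin n) k) := ∑ i, Multiset.replicate (a i) (X i)
  have hP : ∀ p ∈ P, Prime p := by
    intro p hp
    obtain ⟨i, -, hpi⟩ := Multiset.mem_sum.1 hp
    exact Multiset.eq_of_mem_replicate hpi ▸ X_prime
  have hcard : Multiset.card P = d := by
    simp only [P, Multiset.card_sum, Multiset.card_replicate, hd]
  have habs := hcard ▸ isNAbsorbing_span_multiset_prod hP
  have hlt : ∀ N < d, ¬ IsNAbsorbing (Ideal.span {P.prod}) N :=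
    fun N hN => not_isNAbsorbing_span_multiset_prod hP (hcard ▸ hN)
  rw [MvPolynomial.prod_X_pow_eq_multiset_prod]
  exact ⟨habs, hlt (d - 1) (by omega), omegaAbs_eq_of_isNAbsorbing habs hlt⟩
end

section
/- Let $I \subseteq J$ be ideals of a commutative ring $R$ with $\sqrt{I} = \sqrt{J}$. If $I$ is $n$-absorbing, then $(\sqrt{J})^n \subseteq J$; in particular, the Noether exponent of $J$ is at most $\omega(I)$. -/
/-!
An `n`-absorbing ideal `I` is `d`-absorbing for every `d ≥ n` (merge two factors). Fix
`x₀, …, x_{m-1} ∈ √I`; every monomial in the `xᵢ` of large degree lies in `I`, and one descends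
degree by degree down to `n`. Suppose all monomials of degree `d + 1 ≥ n + 1` lie in `I`, and let
`f` be a monomial of degree `d` outside `I` whose sum of indices is minimal. Then `x_k f / x_j ∈ I`
whenever `x_j ∣ f` and `k < j`, and this triangularity lets a greedy choice produce a sum `σ` of
variables with `σ f / x_j ∉ I` for every `x_j ∣ f`. Yet `σ f ∈ I`, and `d`-absorption applied to
the `d + 1` factors `σ, x_{j₁}, …, x_{j_d}` of `σ f` forces `f ∈ I` or some `σ f / x_j ∈ I`.
-/

open Ideal Finset MvPolynomial

theorem Multiset.exists_fin_map_eq_of_card_eq {α : Type*} {s : Multiset α} {n : ℕ}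
    (hs : Multiset.card s = n) : ∃ x : Fin n → α, Finset.univ.val.map x = s := by
  obtain ⟨l, rfl⟩ : ∃ l : List α, ↑l = s := ⟨s.toList, s.coe_toList⟩
  rw [Multiset.coe_card] at hs
  subst hs
  exact ⟨l.get, by rw [Fin.univ_val_map, List.ofFn_get]⟩

theorem Ideal.multiset_prod_mem_pow_card {R : Type*} [CommSemiring R] {K : Ideal R}
    {s : Multiset R} (hs : ∀ a ∈ s, a ∈ K) : s.prod ∈ K ^ Multiset.card s := by
  induction s using Multiset.induction_on with
  | empty => simp
  | cons a s ih =>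
    rw [Multiset.prod_cons, Multiset.card_cons, pow_succ']
    exact Ideal.mul_mem_mul (hs a (Multiset.mem_cons_self a s))
      (ih fun b hb => hs b (Multiset.mem_cons_of_mem hb))

theorem exists_forall_sum_notMem_of_triangular {ι G S : Type*} [LinearOrder ι] [AddCommGroup G]
    [SetLike S G] [AddSubgroupClass S G] (H : S) (a : ι → ι → G) (T : Finset ι)
    (hdiag : ∀ j ∈ T, a j j ∉ H) (hlt : ∀ j ∈ T, ∀ k ∈ T, k < j → a j k ∈ H) :
    ∃ A ⊆ T, ∀ j ∈ T, ∑ k ∈ A, a j k ∉ H := by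
  classical
  induction T using Finset.induction_on_min with
  | empty => exact ⟨∅, subset_refl _, by simp⟩
  | insert p T hpT ih =>
    obtain ⟨A, hAT, hA⟩ := ih (fun j hj => hdiag j (Finset.mem_insert_of_mem hj))
      (fun j hj k hk => hlt j (Finset.mem_insert_of_mem hj) k (Finset.mem_insert_of_mem hk))
    by_cases hp : ∑ k ∈ A, a p k ∈ H
    · have hpA : p ∉ A := fun hpA => (hpT p (hAT hpA)).false
      refine ⟨insert p A, Finset.insert_subset_insert p hAT, ?_⟩
      simp only [Finset.forall_mem_insert, Finset.sum_insert hpA]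
      refine ⟨fun hmem => hdiag p (Finset.mem_insert_self p T) ((add_mem_cancel_right hp).1 hmem),
        fun j hj => ?_⟩
      rw [add_mem_cancel_left (hlt j (Finset.mem_insert_of_mem hj) p
        (Finset.mem_insert_self p T) (hpT j hj))]
      exact hA j hj
    · exact ⟨A, hAT.trans (Finset.subset_insert p T), Finset.forall_mem_insert _ _ _ |>.2 ⟨hp, hA⟩⟩

namespace IsNAbsorbing

variable {R : Type*} [CommRing R] {I : Ideal R} {n : ℕ}

theorem exists_mem_erase_prod_mem [DecidableEq R] (h : IsNAbsorbing I n) {s : Multiset R}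
    (hs : Multiset.card s = n + 1) (hsI : s.prod ∈ I) : ∃ a ∈ s, (s.erase a).prod ∈ I := by
  obtain ⟨x, rfl⟩ := Multiset.exists_fin_map_eq_of_card_eq hs
  obtain ⟨j, hj⟩ := h x hsI
  refine ⟨x j, Multiset.mem_map_of_mem x (Finset.mem_univ_val j), ?_⟩
  rwa [← Multiset.map_erase_of_mem x _ (Finset.mem_univ_val j), ← Finset.erase_val]

theorem exists_mem_erase_prod_mem_of_lt [DecidableEq R] (h : IsNAbsorbing I n) {s : Multiset R}
    (hs : n < Multiset.card s) (hsI : s.prod ∈ I) : ∃ a ∈ s, (s.erase a).prod ∈ I := by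
  obtain ⟨k, hk⟩ := Nat.exists_eq_add_of_lt hs
  induction k generalizing s with
  | zero => exact h.exists_mem_erase_prod_mem hk hsI
  | succ k ih =>
    obtain ⟨a, ha⟩ := Multiset.card_pos_iff_exists_mem.1 (by omega : 0 < Multiset.card s)
    obtain ⟨t, rfl⟩ := Multiset.exists_cons_of_mem ha
    rw [Multiset.card_cons] at hk
    obtain ⟨b, hb⟩ := Multiset.card_pos_iff_exists_mem.1 (by omega : 0 < Multiset.card t)
    obtain ⟨u, rfl⟩ := Multiset.exists_cons_of_mem hb
    rw [Multiset.card_cons] at hk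
    obtain ⟨c, hc, hcI⟩ := ih (s := (a * b) ::ₘ u) (by rw [Multiset.card_cons]; omega)
      (by simpa [mul_assoc] using hsI) (by rw [Multiset.card_cons]; omega)
    by_cases hcab : c = a * b
    · subst hcab
      refine ⟨a, Multiset.mem_cons_self a _, ?_⟩
      simp only [Multiset.erase_cons_head, Multiset.prod_cons] at hcI ⊢
      exact I.mul_mem_left b hcI
    · have hcu : c ∈ u := (Multiset.mem_cons.1 hc).resolve_left hcab
      refine ⟨c, Multiset.mem_cons_of_mem (Multiset.mem_cons_of_mem hcu), ?_⟩
      rw [Multiset.erase_cons_tail_of_mem hcu] at hcI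
      rwa [Multiset.erase_cons_tail_of_mem (Multiset.mem_cons_of_mem hcu),
        Multiset.erase_cons_tail_of_mem hcu, Multiset.prod_cons, Multiset.prod_cons, ← mul_assoc,
        ← Multiset.prod_cons]

theorem multiset_prod_map_mem_of_card_eq (h : IsNAbsorbing I n) {m d : ℕ} (hnd : n ≤ d)
    (x : Fin m → R)
    (hsucc : ∀ f : Multiset (Fin m), Multiset.card f = d + 1 → (f.map x).prod ∈ I)
    {f : Multiset (Fin m)} (hf : Multiset.card f = d) : (f.map x).prod ∈ I := by
  classical
  by_contra hfI
  obtain ⟨f, ⟨hf, hfI⟩, hmin⟩ :=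
    (InvImage.wf (fun f : Multiset (Fin m) => (f.map Fin.val).sum) wellFounded_lt).has_min
      {f | Multiset.card f = d ∧ (f.map x).prod ∉ I} ⟨f, hf, hfI⟩
  have hlt : ∀ j ∈ f, ∀ k < j, x k * ((f.erase j).map x).prod ∈ I := by
    intro j hj k hkj
    by_contra hkI
    refine hmin (k ::ₘ f.erase j)
      ⟨by rw [Multiset.card_cons, Multiset.card_erase_add_one hj, hf], by simpa using hkI⟩ ?_
    show ((k ::ₘ f.erase j).map Fin.val).sum < (f.map Fin.val).sum
    rw [Multiset.map_cons, Multiset.sum_cons, ← Multiset.sum_map_erase hj]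
    exact Nat.add_lt_add_right hkj _
  obtain ⟨A, -, hA⟩ := exists_forall_sum_notMem_of_triangular I
    (fun j k => x k * ((f.erase j).map x).prod) f.toFinset
    (fun j hj => by simpa [Multiset.prod_map_erase (Multiset.mem_toFinset.1 hj)] using hfI)
    (fun j hj k _ hkj => hlt j (Multiset.mem_toFinset.1 hj) k hkj)
  set σ := ∑ k ∈ A, x k
  have hσ : (σ ::ₘ f.map x).prod ∈ I := by
    rw [Multiset.prod_cons, Finset.sum_mul]
    exact sum_mem fun k _ => by simpa using hsucc (k ::ₘ f) (by simp [hf])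
  obtain ⟨b, hb, hbI⟩ := h.exists_mem_erase_prod_mem_of_lt (by simp; omega) hσ
  by_cases hbσ : b = σ
  · subst hbσ
    exact hfI (by simpa using hbI)
  · obtain ⟨j, hj, rfl⟩ := Multiset.mem_map.1 ((Multiset.mem_cons.1 hb).resolve_left hbσ)
    rw [Multiset.erase_cons_tail _ (Ne.symm hbσ), ← Multiset.map_erase_of_mem x _ hj,
      Multiset.prod_cons, Finset.sum_mul] at hbI
    exact hA j (Multiset.mem_toFinset.2 hj) hbI

theorem multiset_prod_map_mem_of_le_card (h : IsNAbsorbing I n) {m : ℕ} (x : Fin m → R)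
    (hx : ∀ i, x i ∈ I.radical) {f : Multiset (Fin m)} (hf : n ≤ Multiset.card f) :
    (f.map x).prod ∈ I := by
  obtain ⟨M, hM⟩ := Ideal.exists_pow_le_of_le_radical_of_fg
    (span_le.2 (Set.range_subset_iff.2 hx)) (Submodule.fg_span (Set.finite_range x))
  have hlarge : ∀ f : Multiset (Fin m), M ≤ Multiset.card f → (f.map x).prod ∈ I := by
    intro f hf
    refine hM (Ideal.pow_le_pow_right hf ?_)
    simpa using Ideal.multiset_prod_mem_pow_card (s := f.map x)
      (by simpa using fun i _ => subset_span (Set.mem_range_self i))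
  suffices ∀ k d, M ≤ d + k → n ≤ d →
      ∀ f : Multiset (Fin m), Multiset.card f = d → (f.map x).prod ∈ I from
    this M _ (Nat.le_add_left M _) hf f rfl
  intro k
  induction k with
  | zero => exact fun d hMd _ f hf => hlarge f (hf ▸ hMd)
  | succ k ih =>
    exact fun d hMd hnd f hf => h.multiset_prod_map_mem_of_card_eq hnd x
      (fun g hg => ih (d + 1) (by omega) (by omega) g hg) hf

theorem prod_mem_of_mem_radical (h : IsNAbsorbing I n) (z : Fin n → R)
    (hz : ∀ i, z i ∈ I.radical) : ∏ i, z i ∈ I :=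
  h.multiset_prod_map_mem_of_le_card z hz (f := Finset.univ.val) (by simp)

theorem radical_pow_le (h : IsNAbsorbing I n) : I.radical ^ n ≤ I := by
  rw [Submodule.pow_eq_span_pow_set, Submodule.span_le]
  intro a ha
  obtain ⟨z, rfl⟩ := Set.mem_pow.1 ha
  rw [List.prod_ofFn]
  exact h.prod_mem_of_mem_radical _ fun i => (z i).2

end IsNAbsorbing

theorem radical_pow_le_of_nAbsorbing_le_general {R : Type*} [CommRing R] (I J : Ideal R)
    (hle : I ≤ J) (hrad : I.radical = J.radical) (n : ℕ)
    (h : IsNAbsorbing I n) :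
    J.radical ^ n ≤ J := by
  rw [← hrad]
  exact h.radical_pow_le.trans hle

theorem radical_pow_le_of_nAbsorbing_le {R : Type*} [CommRing R] (I J : Ideal R)
    (hle : I ≤ J) (hrad : I.radical = J.radical) (n : ℕ) (hn : 1 ≤ n)
    (h : IsNAbsorbing I n) :
    J.radical ^ n ≤ J :=
  radical_pow_le_of_nAbsorbing_le_general I J hle hrad n h
end

section
/- Let $R = k[x,y]$ over a field $k$ and let $I, J$ be $(x,y)$-primary monomial ideals with $J = (x^{c_1}y^{d_1}, \ldots, x^{c_s}y^{d_s})$ in standard form (the $c_i$ strictly decreasing with $c_s = 0$, the $d_i$ strictly increasing with $d_1 = 0$), and suppose $\omega(I) \ge \omega(J)$. Then $\omega(IJ) \le \omega(I) + \max\{c_1, d_s\}$. -/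
open Ideal Finset MvPolynomial

/-! For a monomial ideal `K ⊆ k[x,y]` containing a power of `𝔪 = (x, y)`, being `n`-absorbing
is equivalent to `𝔪ⁿ ⊆ K`. If `𝔪ⁿ ⊆ K`, a factor outside the maximal ideal `𝔪` is a unit modulo
`𝔪ⁿ` and can be dropped, and otherwise any `n` of the factors multiply into `𝔪ⁿ`. If some
`xᵖyᵠ ∉ K` with `p + q = n`, move up to a corner `xᵖ⁺ᵃyᵠ⁺ᵇ ∉ K` with `xᵖ⁺ᵃ⁺¹yᵠ⁺ᵇ, xᵖ⁺ᵃyᵠ⁺ᵇ⁺¹ ∈ K`;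
then `x ⋯ x · y ⋯ y · xᵃyᵇ(x + y)` (with `p` factors `x` and `q` factors `y`) lies in `K`, but
omitting any factor leaves a polynomial with `xᵖ⁺ᵃyᵠ⁺ᵇ` in its support, so not in `K`.

Hence `𝔪^ω(I) ⊆ I`, and `y^ω(J) ∈ J` forces `d_s ≤ ω(J) ≤ ω(I)`. A monomial of degree
`ω(I) + max(c₁, d_s)` is then divisible by `x^c₁` or `y^d_s` with a cofactor of degree `≥ ω(I)`,
so it lies in `IJ`, and `IJ` is `(ω(I) + max(c₁, d_s))`-absorbing. -/

section Absorbing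

variable {R : Type*} [CommRing R] {K : Ideal R} {n : ℕ}

lemma IsNAbsorbing.exists_mul_eq_prod_of_mem (h : IsNAbsorbing K n) (x : Fin (n + 1) → R)
    (hx : ∏ i, x i ∈ K) : ∃ j, ∃ f ∈ K, f * x j = ∏ i, x i := by
  obtain ⟨j, hj⟩ := h x hx
  exact ⟨j, _, hj, Finset.prod_erase_mul _ _ (Finset.mem_univ j)⟩

lemma isNAbsorbing_of_pow_le {𝔪 : Ideal R} [𝔪.IsMaximal] (h : 𝔪 ^ n ≤ K) :
    IsNAbsorbing K n := by
  intro x hx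
  by_cases hall : ∀ i, x i ∈ 𝔪
  · refine ⟨0, h ?_⟩
    simpa using Ideal.prod_mem_prod (s := Finset.univ.erase 0) (I := fun _ => 𝔪) fun i _ => hall i
  · push Not at hall
    obtain ⟨j, hj⟩ := hall
    refine ⟨j, ?_⟩
    obtain ⟨y, m, hm, hym⟩ := Ideal.IsMaximal.exists_inv_pow 𝔪 hj n
    have hmul : (∏ i ∈ Finset.univ.erase j, x i) * x j ∈ K := by
      rwa [Finset.prod_erase_mul _ _ (Finset.mem_univ j)]
    rw [← mul_one (∏ i ∈ _, x i), ← hym, mul_add, ← mul_assoc, mul_comm _ y, mul_assoc]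
    exact K.add_mem (K.mul_mem_left y hmul) (K.mul_mem_left _ (h hm))

end Absorbing

section MonomialIdeal

variable {σ R : Type*} [CommSemiring R]

def IsMonomialIdeal (K : Ideal (MvPolynomial σ R)) : Prop :=
  ∃ S : Set (MvPolynomial σ R), (∀ g ∈ S, ∃ e : σ →₀ ℕ, g = monomial e 1) ∧ K = Ideal.span S

lemma monomial_mem_ideal_span_monomial_image_iff [Nontrivial R] {T : Set (σ →₀ ℕ)}
    {u : σ →₀ ℕ} :
    monomial u (1 : R) ∈ Ideal.span ((fun e => monomial e 1) '' T) ↔ ∃ e ∈ T, e ≤ u := by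
  classical
  simp [mem_ideal_span_monomial_image, support_monomial]

lemma IsMonomialIdeal.monomial_mem_of_mem_support [Nontrivial R] {K : Ideal (MvPolynomial σ R)}
    (hK : IsMonomialIdeal K) {f : MvPolynomial σ R} (hf : f ∈ K) {u : σ →₀ ℕ}
    (hu : u ∈ f.support) : monomial u 1 ∈ K := by
  obtain ⟨S, hS, rfl⟩ := hK
  have hS' : S = (fun e => monomial e (1 : R)) '' {e | monomial e 1 ∈ S} := by
    ext g
    refine ⟨fun hg => ?_, fun ⟨e, he, hg⟩ => hg ▸ he⟩
    obtain ⟨e, rfl⟩ := hS g hg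
    exact ⟨e, hg, rfl⟩
  rw [hS'] at hf ⊢
  exact monomial_mem_ideal_span_monomial_image_iff.2 (mem_ideal_span_monomial_image.1 hf u hu)

end MonomialIdeal

lemma idealOfVars_eq_ker_constantCoeff {σ R : Type*} [CommSemiring R] :
    idealOfVars σ R = RingHom.ker (constantCoeff (σ := σ) (R := R)) := by
  ext p
  rw [← pow_one (idealOfVars σ R), mem_pow_idealOfVars_iff', RingHom.mem_ker, constantCoeff_eq]
  refine ⟨fun h => h 0 (by simp), fun h x hx => ?_⟩
  rw [Nat.lt_one_iff, Finsupp.degree_eq_zero_iff] at hx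
  rwa [hx]

instance isMaximal_idealOfVars {σ k : Type*} [Field k] : (idealOfVars σ k).IsMaximal := by
  rw [idealOfVars_eq_ker_constantCoeff]
  exact RingHom.ker_isMaximal_of_surjective _ fun a => ⟨C a, constantCoeff_C _ a⟩

section TwoVariables

variable {k : Type*} [Field k]

local notation "𝔪" => idealOfVars (Fin 2) k

lemma span_X_zero_X_one : Ideal.span {X 0, X 1} = 𝔪 := by
  rw [idealOfVars, Set.pair_comm]
  congr 1
  ext
  simp [Fin.exists_fin_two, eq_comm, or_comm]

lemma monomial_eq_X_zero_pow_mul_X_one_pow (v : Fin 2 →₀ ℕ) :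
    monomial v (1 : k) = X 0 ^ v 0 * X 1 ^ v 1 := by
  rw [monomial_eq, Finsupp.prod_pow, Fin.prod_univ_two, C_1, one_mul]

lemma X_zero_pow_mul_X_one_pow_eq_monomial (p q : ℕ) :
    (X 0 ^ p * X 1 ^ q : MvPolynomial (Fin 2) k)
      = monomial (Finsupp.single 0 p + Finsupp.single 1 q) 1 := by
  rw [X_pow_eq_monomial, X_pow_eq_monomial, monomial_mul, one_mul]

lemma X_zero_pow_mul_X_one_pow_mem_pow (p q : ℕ) :
    (X 0 ^ p * X 1 ^ q : MvPolynomial (Fin 2) k) ∈ 𝔪 ^ (p + q) := by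
  rw [pow_add]
  exact Ideal.mul_mem_mul (Ideal.pow_mem_pow (Ideal.subset_span (Set.mem_range_self 0)) p)
    (Ideal.pow_mem_pow (Ideal.subset_span (Set.mem_range_self 1)) q)

lemma pow_le_of_forall_X_zero_pow_mul_X_one_pow_mem {K : Ideal (MvPolynomial (Fin 2) k)} {n : ℕ}
    (h : ∀ p q, p + q = n → X 0 ^ p * X 1 ^ q ∈ K) : 𝔪 ^ n ≤ K := by
  rw [pow_idealOfVars_eq_span, Ideal.span_le]
  rintro _ ⟨v, hv, rfl⟩
  beta_reduce
  rw [SetLike.mem_coe, monomial_eq_X_zero_pow_mul_X_one_pow]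
  refine h _ _ ?_
  rwa [Set.mem_preimage, Set.mem_singleton_iff, Finsupp.degree_eq_sum, Fin.sum_univ_two] at hv

lemma pow_add_le_of_X_pow_mem {K : Ideal (MvPolynomial (Fin 2) k)} {A B : ℕ}
    (hA : X 0 ^ A ∈ K) (hB : X 1 ^ B ∈ K) : 𝔪 ^ (A + B) ≤ K := by
  refine pow_le_of_forall_X_zero_pow_mul_X_one_pow_mem fun p q hpq => ?_
  rcases le_or_gt A p with hp | hp
  · rw [← pow_mul_pow_sub _ hp, mul_assoc]
    exact K.mul_mem_right _ hA
  · rw [← pow_mul_pow_sub _ (show B ≤ q by omega), mul_left_comm]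
    exact K.mul_mem_right _ hB

lemma pow_add_max_le_mul {I J : Ideal (MvPolynomial (Fin 2) k)} {a A B : ℕ} (hI : 𝔪 ^ a ≤ I)
    (hA : X 0 ^ A ∈ J) (hB : X 1 ^ B ∈ J) (hBa : B ≤ a) : 𝔪 ^ (a + max A B) ≤ I * J := by
  refine pow_le_of_forall_X_zero_pow_mul_X_one_pow_mem fun p q hpq => ?_
  rcases le_or_gt A p with hp | hp
  · have hmem : X 0 ^ (p - A) * X 1 ^ q ∈ I :=
      hI (Ideal.pow_le_pow_right (by omega) (X_zero_pow_mul_X_one_pow_mem_pow _ _))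
    convert Ideal.mul_mem_mul hmem hA using 1
    rw [← pow_mul_pow_sub _ hp]
    ring
  · have hq : B ≤ q := by omega
    have hmem : X 0 ^ p * X 1 ^ (q - B) ∈ I :=
      hI (Ideal.pow_le_pow_right (by omega) (X_zero_pow_mul_X_one_pow_mem_pow _ _))
    convert Ideal.mul_mem_mul hmem hB using 1
    rw [← pow_mul_pow_sub _ hq]
    ring

lemma exists_corner {K : Ideal (MvPolynomial (Fin 2) k)} {N p q : ℕ} (hN : 𝔪 ^ N ≤ K)
    (h : X 0 ^ p * X 1 ^ q ∉ K) :
    ∃ a b, X 0 ^ (p + a) * X 1 ^ (q + b) ∉ K ∧ X 0 ^ (p + a + 1) * X 1 ^ (q + b) ∈ K ∧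
      X 0 ^ (p + a) * X 1 ^ (q + b + 1) ∈ K := by
  induction hm : N - (p + q) using Nat.strong_induction_on generalizing p q with
  | _ m ih =>
    have hlt : p + q < N := by
      by_contra hle
      exact h (hN (Ideal.pow_le_pow_right (not_lt.1 hle) (X_zero_pow_mul_X_one_pow_mem_pow p q)))
    by_cases hx : X 0 ^ (p + 1) * X 1 ^ q ∈ K
    · by_cases hy : X 0 ^ p * X 1 ^ (q + 1) ∈ K
      · exact ⟨0, 0, h, hx, hy⟩
      · obtain ⟨a, b, hab⟩ := ih _ (by omega) hy rfl
        exact ⟨a, 1 + b, by simpa only [add_assoc] using hab⟩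
    · obtain ⟨a, b, hab⟩ := ih _ (by omega) hx rfl
      exact ⟨1 + a, b, by simpa only [add_assoc] using hab⟩

lemma IsMonomialIdeal.X_pow_mul_X_pow_mem_of_mul_X_add_X_mem
    {K : Ideal (MvPolynomial (Fin 2) k)} (hK : IsMonomialIdeal K) {m n : ℕ}
    (h : X 0 ^ m * X 1 ^ n * (X 0 + X 1) ∈ K) :
    X 0 ^ (m + 1) * X 1 ^ n ∈ K ∧ X 0 ^ m * X 1 ^ (n + 1) ∈ K := by
  classical
  rw [X_zero_pow_mul_X_one_pow_eq_monomial, X_zero_pow_mul_X_one_pow_eq_monomial]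
  set e₁ := Finsupp.single 0 (m + 1) + Finsupp.single (1 : Fin 2) n
  set e₂ := Finsupp.single 0 m + Finsupp.single (1 : Fin 2) (n + 1)
  have hsum : X 0 ^ m * X 1 ^ n * (X 0 + X 1) = monomial e₁ (1 : k) + monomial e₂ 1 := by
    simp only [e₁, e₂, ← X_zero_pow_mul_X_one_pow_eq_monomial]
    ring
  have hne : e₁ ≠ e₂ := fun he => by simpa [e₁, e₂] using DFunLike.congr_fun he 0
  rw [hsum] at h
  refine ⟨hK.monomial_mem_of_mem_support h ?_, hK.monomial_mem_of_mem_support h ?_⟩ <;>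
    simp [mem_support_iff, coeff_monomial, hne, hne.symm]

lemma X_zero_add_X_one_ne_zero : (X 0 + X 1 : MvPolynomial (Fin 2) k) ≠ 0 := by
  intro h
  simpa using congrArg (eval ![1, 0]) h

lemma IsMonomialIdeal.not_isNAbsorbing_of_corner {K : Ideal (MvPolynomial (Fin 2) k)}
    (hK : IsMonomialIdeal K) {p q a b : ℕ}
    (h₀ : X 0 ^ (p + a) * X 1 ^ (q + b) ∉ K) (hx : X 0 ^ (p + a + 1) * X 1 ^ (q + b) ∈ K)
    (hy : X 0 ^ (p + a) * X 1 ^ (q + b + 1) ∈ K) : ¬ IsNAbsorbing K (p + q) := by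
  intro habs
  set g : MvPolynomial (Fin 2) k := X 0 ^ a * X 1 ^ b * (X 0 + X 1)
  have hg : g ≠ 0 :=
    mul_ne_zero (mul_ne_zero (pow_ne_zero _ (X_ne_zero 0)) (pow_ne_zero _ (X_ne_zero 1)))
      X_zero_add_X_one_ne_zero
  set x : Fin (p + q + 1) → MvPolynomial (Fin 2) k :=
    Fin.cons g (Fin.append (fun _ : Fin p => X 0) (fun _ : Fin q => X 1))
  have hprod : ∏ i, x i = X 0 ^ (p + a) * X 1 ^ (q + b) * (X 0 + X 1) := by
    simp only [x, g, Fin.prod_cons, Fin.prod_univ_add, Fin.append_left, Fin.append_right,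
      Finset.prod_const, Finset.card_univ, Fintype.card_fin]
    ring
  have hmem : ∏ i, x i ∈ K := by
    rw [hprod]
    convert K.add_mem hx hy using 1
    ring
  obtain ⟨j, f, hf, hfx⟩ := habs.exists_mul_eq_prod_of_mem x hmem
  rw [hprod] at hfx
  cases j using Fin.cases with
  | zero =>
    have : f = X 0 ^ p * X 1 ^ q := mul_right_cancel₀ hg (hfx.trans (by ring))
    apply h₀
    rw [this] at hf
    convert K.mul_mem_right (X 0 ^ a * X 1 ^ b) hf using 1
    ring
  | succ i =>
    cases i using Fin.addCases with
    | left i =>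
      obtain ⟨p, rfl⟩ := Nat.exists_eq_add_one_of_ne_zero i.pos.ne'
      have hxi : x (Fin.succ (Fin.castAdd q i)) = X 0 := by simp [x]
      have : f = X 0 ^ (p + a) * X 1 ^ (q + b) * (X 0 + X 1) :=
        mul_right_cancel₀ (X_ne_zero 0) ((hxi ▸ hfx).trans (by ring))
      apply h₀
      convert (hK.X_pow_mul_X_pow_mem_of_mul_X_add_X_mem (this ▸ hf)).1 using 3
      ring
    | right i =>
      obtain ⟨q, rfl⟩ := Nat.exists_eq_add_one_of_ne_zero i.pos.ne'
      have hxi : x (Fin.succ (Fin.natAdd p i)) = X 1 := by simp [x]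
      have : f = X 0 ^ (p + a) * X 1 ^ (q + b) * (X 0 + X 1) :=
        mul_right_cancel₀ (X_ne_zero 1) ((hxi ▸ hfx).trans (by ring))
      apply h₀
      convert (hK.X_pow_mul_X_pow_mem_of_mul_X_add_X_mem (this ▸ hf)).2 using 3
      ring

lemma IsMonomialIdeal.isNAbsorbing_iff_pow_le {K : Ideal (MvPolynomial (Fin 2) k)}
    (hK : IsMonomialIdeal K) {N n : ℕ} (hN : 𝔪 ^ N ≤ K) : IsNAbsorbing K n ↔ 𝔪 ^ n ≤ K := by
  refine ⟨fun habs => ?_, isNAbsorbing_of_pow_le⟩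
  by_contra hn
  obtain ⟨p, q, rfl, hpq⟩ : ∃ p q, p + q = n ∧ X 0 ^ p * X 1 ^ q ∉ K := by
    by_contra! h
    exact hn (pow_le_of_forall_X_zero_pow_mul_X_one_pow_mem h)
  obtain ⟨a, b, h₀, hx, hy⟩ := exists_corner hN hpq
  exact hK.not_isNAbsorbing_of_corner h₀ hx hy habs

lemma IsMonomialIdeal.pow_omegaAbs_le {K : Ideal (MvPolynomial (Fin 2) k)}
    (hK : IsMonomialIdeal K) {N : ℕ} (hN : 𝔪 ^ N ≤ K) : 𝔪 ^ omegaAbs K ≤ K :=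
  (hK.isNAbsorbing_iff_pow_le hN).1 <|
    Nat.sInf_mem (s := {n | IsNAbsorbing K n}) ⟨N, (hK.isNAbsorbing_iff_pow_le hN).2 hN⟩

lemma span_X_zero_pow_mul_X_one_pow_eq {ι : Type*} (c d : ι → ℕ) :
    Ideal.span (Set.range fun i => (X 0 ^ c i * X 1 ^ d i : MvPolynomial (Fin 2) k))
      = Ideal.span ((fun e => monomial e 1) ''
          Set.range fun i => Finsupp.single 0 (c i) + Finsupp.single 1 (d i)) := by
  rw [← Set.range_comp]
  simp only [Function.comp_def, X_zero_pow_mul_X_one_pow_eq_monomial]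

lemma le_of_X_one_pow_mem_span {s n : ℕ} {c d : Fin (s + 1) → ℕ} (hc : StrictAnti c)
    (hcs : c (Fin.last s) = 0)
    (h : X 1 ^ n ∈
      Ideal.span (Set.range fun i => (X 0 ^ c i * X 1 ^ d i : MvPolynomial (Fin 2) k))) :
    d (Fin.last s) ≤ n := by
  rw [span_X_zero_pow_mul_X_one_pow_eq, X_pow_eq_monomial,
    monomial_mem_ideal_span_monomial_image_iff] at h
  obtain ⟨_, ⟨i, rfl⟩, hle⟩ := h
  have h0 := hle 0
  have h1 := hle 1
  simp only [Finsupp.add_apply, Finsupp.single_apply] at h0 h1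
  have : i = Fin.last s := hc.injective (by simp at h0; omega)
  subst this
  simpa using h1

end TwoVariables

theorem omega_mul_le_two_vars_general {k : Type*} [Field k] (s : ℕ) (c d : Fin (s + 1) → ℕ)
    (hc : StrictAnti c) (hcs : c (Fin.last s) = 0) (hd0 : d 0 = 0)
    (I J : Ideal (MvPolynomial (Fin 2) k))
    (hIr : I.radical = Ideal.span {(X 0 : MvPolynomial (Fin 2) k), X 1})
    (hImono : ∃ S : Set (MvPolynomial (Fin 2) k),
      (∀ g ∈ S, ∃ e : Fin 2 →₀ ℕ, g = monomial e 1) ∧ I = Ideal.span S)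
    (hJ : J = Ideal.span (Set.range fun i =>
      (X 0 : MvPolynomial (Fin 2) k) ^ c i * (X 1 : MvPolynomial (Fin 2) k) ^ d i))
    (hw : omegaAbs J ≤ omegaAbs I) :
    omegaAbs (I * J) ≤ omegaAbs I + max (c 0) (d (Fin.last s)) := by
  rw [span_X_zero_X_one] at hIr
  obtain ⟨A, hA⟩ : X 0 ∈ I.radical := hIr ▸ Ideal.subset_span (Set.mem_range_self 0)
  obtain ⟨B, hB⟩ : X 1 ∈ I.radical := hIr ▸ Ideal.subset_span (Set.mem_range_self 1)
  have hI := IsMonomialIdeal.pow_omegaAbs_le hImono (pow_add_le_of_X_pow_mem hA hB)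
  have hJmono : IsMonomialIdeal J :=
    ⟨_, by rintro _ ⟨i, rfl⟩; exact ⟨_, X_zero_pow_mul_X_one_pow_eq_monomial _ _⟩, hJ⟩
  have hx : X 0 ^ c 0 ∈ J := hJ ▸ Ideal.subset_span ⟨0, by simp [hd0]⟩
  have hy : X 1 ^ d (Fin.last s) ∈ J := hJ ▸ Ideal.subset_span ⟨Fin.last s, by simp [hcs]⟩
  have hyJ : X 1 ^ omegaAbs J ∈ J := hJmono.pow_omegaAbs_le (pow_add_le_of_X_pow_mem hx hy)
    (by simpa using X_zero_pow_mul_X_one_pow_mem_pow 0 (omegaAbs J))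
  have hds : d (Fin.last s) ≤ omegaAbs I :=
    (le_of_X_one_pow_mem_span hc hcs (by rwa [← hJ])).trans hw
  exact Nat.sInf_le (isNAbsorbing_of_pow_le (pow_add_max_le_mul hI hx hy hds))

theorem omega_mul_le_two_vars {k : Type*} [Field k] (s : ℕ) (c d : Fin (s + 1) → ℕ)
    (hc : StrictAnti c) (hd : StrictMono d) (hcs : c (Fin.last s) = 0) (hd0 : d 0 = 0)
    (I J : Ideal (MvPolynomial (Fin 2) k))
    (hIp : I.IsPrimary)
    (hIr : I.radical = Ideal.span {(X 0 : MvPolynomial (Fin 2) k), X 1})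
    (hImono : ∃ S : Set (MvPolynomial (Fin 2) k),
      (∀ g ∈ S, ∃ e : Fin 2 →₀ ℕ, g = monomial e 1) ∧ I = Ideal.span S)
    (hJ : J = Ideal.span (Set.range fun i =>
      (X 0 : MvPolynomial (Fin 2) k) ^ c i * (X 1 : MvPolynomial (Fin 2) k) ^ d i))
    (hw : omegaAbs J ≤ omegaAbs I) :
    omegaAbs (I * J) ≤ omegaAbs I + max (c 0) (d (Fin.last s)) :=
  omega_mul_le_two_vars_general s c d hc hcs hd0 I J hIr hImono hJ hw
end

section
/- Let $k$ be a field, let $R = k[x_1,\ldots,x_n]$, and let $P_1, \ldots, P_r$ be pairwise incomparable monomial prime ideals in $R$. Then $\omega(P_1 \cap \cdots \cap P_r) = r$: the intersection is $r$-absorbing but not $(r-1)$-absorbing. -/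
open Ideal Finset MvPolynomial

section Aux

variable {k : Type*} [Field k] {σ : Type*}

/-- Coefficient of the retraction killing the variables in `s`. -/
lemma coeff_aeval_kill {s : Set σ} [DecidablePred (· ∈ s)] (m : σ →₀ ℕ) (hm : ∀ i ∈ s, m i = 0)
    (x : MvPolynomial σ k) :
    coeff m (aeval (fun i => if i ∈ s then 0 else X i : σ → MvPolynomial σ k) x)
      = coeff m x := by
  classical
  conv_lhs => rw [x.as_sum]
  rw [map_sum, coeff_sum]
  conv_rhs => rw [x.as_sum, coeff_sum]
  refine Finset.sum_congr rfl fun d _ => ?_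
  rw [aeval_monomial]
  by_cases h : ∃ i ∈ s, d i ≠ 0
  · obtain ⟨i, his, hdi⟩ := h
    have h0 : (d.prod fun i k' =>
        (if i ∈ s then 0 else X i : MvPolynomial σ k) ^ k') = 0 := by
      refine Finset.prod_eq_zero (Finsupp.mem_support_iff.mpr hdi) ?_
      simp only [if_pos his, zero_pow hdi]
    rw [h0, mul_zero]
    have hdm : d ≠ m := fun h => hdi (h ▸ hm i his)
    rw [coeff_monomial, if_neg hdm, coeff_zero]
  · push_neg at h
    have h1 : (d.prod fun i k' =>
        (if i ∈ s then 0 else X i : MvPolynomial σ k) ^ k')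
        = d.prod fun i k' => (X i : MvPolynomial σ k) ^ k' := by
      refine Finsupp.prod_congr fun i hi => ?_
      simp only [if_neg fun his => (Finsupp.mem_support_iff.mp hi) (h i his)]
    rw [h1, algebraMap_eq, ← monomial_eq]
  
lemma mem_span_X_iff_aeval_eq_zero {s : Set σ} [DecidablePred (· ∈ s)] (x : MvPolynomial σ k) :
    x ∈ Ideal.span (MvPolynomial.X '' s : Set (MvPolynomial σ k)) ↔
      aeval (fun i => if i ∈ s then 0 else X i : σ → MvPolynomial σ k) x = 0 := by
  classical
  constructor
  · intro hx
    have hle : Ideal.span (MvPolynomial.X '' s : Set (MvPolynomial σ k)) ≤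
        RingHom.ker (aeval (fun i => if i ∈ s then 0 else X i :
          σ → MvPolynomial σ k)).toRingHom := by
      rw [Ideal.span_le]
      rintro _ ⟨i, his, rfl⟩
      simp [RingHom.mem_ker, his]
    exact hle hx
  · intro hx
    rw [mem_ideal_span_X_image]
    intro m hmx
    by_contra hcon
    push_neg at hcon
    have := coeff_aeval_kill (k := k) m hcon x
    rw [hx, coeff_zero] at this
    exact (mem_support_iff.mp hmx) this.symm

lemma isPrime_span_X_image (s : Set σ) :
    (Ideal.span (MvPolynomial.X '' s : Set (MvPolynomial σ k))).IsPrime := by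
  haveI : DecidablePred (· ∈ s) := Classical.decPred _
  constructor
  · intro htop
    have h1 : (1 : MvPolynomial σ k) ∈ Ideal.span (MvPolynomial.X '' s) := by
      rw [htop]; trivial
    rw [mem_span_X_iff_aeval_eq_zero, map_one] at h1
    exact one_ne_zero h1
  · intro p q hpq
    rw [mem_span_X_iff_aeval_eq_zero] at hpq ⊢
    rw [mem_span_X_iff_aeval_eq_zero (s := s) q]
    rw [_root_.map_mul] at hpq
    exact mul_eq_zero.mp hpq

end Aux

theorem omega_inter_incomparable_monomial_primes {k : Type*} [Field k] (n r : ℕ)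
    (hr : 0 < r) (V : Fin r → Finset (Fin n))
    (hinc : ∀ i j, i ≠ j →
      ¬ Ideal.span ((fun t => (X t : MvPolynomial (Fin n) k)) '' ↑(V i)) ≤
        Ideal.span ((fun t => (X t : MvPolynomial (Fin n) k)) '' ↑(V j))) :
    IsNAbsorbing (⨅ i, Ideal.span ((fun t => (X t : MvPolynomial (Fin n) k)) '' ↑(V i))) r ∧
      ¬ IsNAbsorbing
        (⨅ i, Ideal.span ((fun t => (X t : MvPolynomial (Fin n) k)) '' ↑(V i))) (r - 1) := by
  classical
  set P : Fin r → Ideal (MvPolynomial (Fin n) k) :=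
    fun i => Ideal.span ((fun t => (X t : MvPolynomial (Fin n) k)) '' ↑(V i)) with hPdef
  have hPeq : ∀ i, P i = Ideal.span (MvPolynomial.X '' (↑(V i) : Set (Fin n))) := by
    intro i; rfl
  have hprime : ∀ i, (P i).IsPrime := by
    intro i; rw [hPeq]; exact isPrime_span_X_image _
  constructor
  · intro x hx
    rw [Ideal.mem_iInf] at hx
    have hfac : ∀ i : Fin r, ∃ j, x j ∈ P i := by
      intro i
      haveI := hprime i
      have := Ideal.IsPrime.prod_mem_iff.mp (hx i)
      obtain ⟨j, _, hj⟩ := this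
      exact ⟨j, hj⟩
    choose f hf using hfac
    obtain ⟨j, hj⟩ : ∃ j : Fin (r + 1), ∀ i, f i ≠ j := by
      by_contra hcon
      push_neg at hcon
      have hsurj : Function.Surjective f := fun j => hcon j
      have := Fintype.card_le_of_surjective f hsurj
      simp at this
    refine ⟨j, Ideal.mem_iInf.mpr fun i => ?_⟩
    have hmem : f i ∈ Finset.univ.erase j := Finset.mem_erase.mpr ⟨hj i, Finset.mem_univ _⟩
    rw [← Finset.mul_prod_erase _ _ hmem]
    exact Ideal.mul_mem_right _ _ (hf i)
  · intro habs
    have key : ∀ j : Fin r, ∃ a, a ∈ P j ∧ ∀ i, i ≠ j → a ∉ P i := by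
      intro j
      have hsub : ¬ ((P j : Set (MvPolynomial (Fin n) k)) ⊆
          ⋃ i ∈ (↑(Finset.univ.erase j) : Set (Fin r)), (P i : Set (MvPolynomial (Fin n) k))) := by
        rw [Ideal.subset_union_prime j j (fun i _ _ _ => hprime i)]
        rintro ⟨i, hi, hle⟩
        have hij : i ≠ j := Finset.ne_of_mem_erase hi
        exact hinc j i hij.symm hle
      obtain ⟨a, haj, ha⟩ := Set.not_subset.mp hsub
      refine ⟨a, haj, fun i hij hmem => ha ?_⟩
      refine Set.mem_biUnion ?_ hmem
      simp [hij]
    choose a ha1 ha2 using key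
    obtain ⟨m, rfl⟩ : ∃ m, r = m + 1 := ⟨r - 1, (Nat.succ_pred_eq_of_pos hr).symm⟩
    have hprod : (∏ i, a i) ∈ ⨅ i, P i := by
      rw [Ideal.mem_iInf]
      intro i
      rw [← Finset.mul_prod_erase _ _ (Finset.mem_univ i)]
      exact Ideal.mul_mem_right _ _ (ha1 i)
    obtain ⟨j, hj⟩ := habs a hprod
    have hj' : (∏ i ∈ Finset.univ.erase j, a i) ∈ P j := by
      exact Ideal.mem_iInf.mp hj j
    haveI := hprime j
    obtain ⟨i, hi, hiP⟩ := Ideal.IsPrime.prod_mem_iff.mp hj'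
    exact ha2 i j (Finset.ne_of_mem_erase hi).symm hiP
end

section
/- Let $R = k[x,y]$ over a field $k$ and let $I$ be an $(x,y)$-primary monomial ideal with minimal generators $(x^{a_1}y^{b_1}, \ldots, x^{a_r}y^{b_r})$ in standard form ($a_i$ strictly decreasing, $b_i$ strictly increasing, $a_r = b_1 = 0$). Then the following are equivalent: (1) $\omega(I^m) = m\,\omega(I)$ for all $m \in \mathbb{N}$; (2) $\omega(I^m) = m\,\omega(I)$ for some $m > 1$; (3) $\omega(I) = \max\{a_1, b_r\}$. -/
open Ideal Finset MvPolynomial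
open Pointwise

namespace OmegaScratch

variable {k : Type*} [Field k]

/-- shorthand for monomials with coefficient 1 -/
noncomputable def mo (d : Fin 2 →₀ ℕ) : MvPolynomial (Fin 2) k := monomial d 1

/-- the maximal ideal (X 0, X 1) -/
noncomputable def msp (k : Type*) [Field k] : Ideal (MvPolynomial (Fin 2) k) :=
  Ideal.span {X 0, X 1}

/-- exponent pair -/
noncomputable def pair (i j : ℕ) : Fin 2 →₀ ℕ := Finsupp.single 0 i + Finsupp.single 1 j

/-- total degree of an exponent -/
def dg (d : Fin 2 →₀ ℕ) : ℕ := d 0 + d 1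

@[simp] lemma pair_apply_zero (i j : ℕ) : pair i j 0 = i := by
  simp [pair, Finsupp.single_apply]

@[simp] lemma pair_apply_one (i j : ℕ) : pair i j 1 = j := by
  simp [pair, Finsupp.single_apply]

lemma fin2_le {d e : Fin 2 →₀ ℕ} : d ≤ e ↔ d 0 ≤ e 0 ∧ d 1 ≤ e 1 := by
  rw [Finsupp.le_def, Fin.forall_fin_two]

lemma fin2_ext {d e : Fin 2 →₀ ℕ} (h0 : d 0 = e 0) (h1 : d 1 = e 1) : d = e := by
  apply Finsupp.ext
  rw [Fin.forall_fin_two]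
  exact ⟨h0, h1⟩

@[simp] lemma dg_add (d e : Fin 2 →₀ ℕ) : dg (d + e) = dg d + dg e := by
  simp [dg]; ring

@[simp] lemma dg_pair (i j : ℕ) : dg (pair i j) = i + j := by simp [dg]

lemma pair_eta (d : Fin 2 →₀ ℕ) : pair (d 0) (d 1) = d :=
  fin2_ext (by simp) (by simp)

lemma mo_mul (d e : Fin 2 →₀ ℕ) : (mo d : MvPolynomial (Fin 2) k) * mo e = mo (d + e) := by
  simp [mo, monomial_mul]

lemma X0_eq_mo : (X 0 : MvPolynomial (Fin 2) k) = mo (pair 1 0) := by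
  have : pair 1 0 = Finsupp.single (0 : Fin 2) 1 := by simp [pair]
  rw [this, mo, ← X_pow_eq_monomial, pow_one]

lemma X1_eq_mo : (X 1 : MvPolynomial (Fin 2) k) = mo (pair 0 1) := by
  have : pair 0 1 = Finsupp.single (1 : Fin 2) 1 := by simp [pair]
  rw [this, mo, ← X_pow_eq_monomial, pow_one]

lemma span_mono_mul (A B : Set (Fin 2 →₀ ℕ)) :
    Ideal.span (mo '' A : Set (MvPolynomial (Fin 2) k)) * Ideal.span (mo '' B) =
      Ideal.span (mo '' (A + B)) := by
  rw [Ideal.span_mul_span']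
  congr 1
  ext p
  constructor
  · rintro ⟨-, ⟨da, hda, rfl⟩, -, ⟨db, hdb, rfl⟩, rfl⟩
    exact ⟨da + db, Set.add_mem_add hda hdb, (mo_mul da db).symm⟩
  · rintro ⟨d, hd, rfl⟩
    rw [Set.mem_add] at hd
    obtain ⟨da, hda, db, hdb, rfl⟩ := hd
    exact ⟨mo da, ⟨da, hda, rfl⟩, mo db, ⟨db, hdb, rfl⟩, mo_mul da db⟩

lemma msp_eq : msp k = Ideal.span (mo '' {pair 1 0, pair 0 1}) := by
  rw [msp, Set.image_pair, ← X0_eq_mo, ← X1_eq_mo]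

lemma msp_pow (t : ℕ) :
    (msp k) ^ t = Ideal.span (mo '' {d | dg d = t}) := by
  induction t with
  | zero =>
    have h0 : ({d | dg d = 0} : Set (Fin 2 →₀ ℕ)) = {0} := by
      ext d
      simp only [Set.mem_setOf_eq, Set.mem_singleton_iff, dg]
      constructor
      · intro h
        apply fin2_ext <;> simp <;> omega
      · rintro rfl; simp
    rw [pow_zero, Ideal.one_eq_top, h0]
    have : (mo '' {0} : Set (MvPolynomial (Fin 2) k)) = {1} := by
      simp [mo]
    rw [this, Ideal.span_singleton_one]
  | succ t ih =>
    rw [pow_succ, ih, msp_eq, span_mono_mul]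
    have hset : ({d | dg d = t} + {pair 1 0, pair 0 1} : Set (Fin 2 →₀ ℕ))
        = {d | dg d = t + 1} := by
      ext d
      rw [Set.mem_add]
      constructor
      · rintro ⟨da, hda, db, hdb, rfl⟩
        rcases hdb with rfl | rfl <;> simp_all [dg] <;> omega
      · intro hd
        simp only [Set.mem_setOf_eq] at hd
        by_cases h0 : 0 < d 0
        · refine ⟨d - pair 1 0, ?_, pair 1 0, Or.inl rfl, ?_⟩
          · simp only [Set.mem_setOf_eq, dg, Finsupp.tsub_apply]
            simp only [pair_apply_zero, pair_apply_one, dg] at hd ⊢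
            omega
          · apply fin2_ext <;> simp [Finsupp.tsub_apply] <;> omega
        · refine ⟨d - pair 0 1, ?_, pair 0 1, Or.inr rfl, ?_⟩
          · simp only [Set.mem_setOf_eq, dg, Finsupp.tsub_apply]
            simp only [pair_apply_zero, pair_apply_one, dg] at hd ⊢
            omega
          · have h1 : 0 < d 1 := by simp only [dg] at hd; omega
            apply fin2_ext <;> simp [Finsupp.tsub_apply] <;> omega
    rw [hset]

lemma mo_mem_msp_pow {d : Fin 2 →₀ ℕ} {t : ℕ} (h : t ≤ dg d) :
    (mo d : MvPolynomial (Fin 2) k) ∈ (msp k) ^ t := by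
  have h1 : (mo d : MvPolynomial (Fin 2) k) ∈ (msp k) ^ (dg d) := by
    rw [msp_pow]
    exact Ideal.subset_span ⟨d, rfl, rfl⟩
  exact Ideal.pow_le_pow_right h h1

lemma mem_msp_of_constantCoeff_zero {p : MvPolynomial (Fin 2) k}
    (hp : constantCoeff p = 0) : p ∈ msp k := by
  have hp0 : coeff 0 p = 0 := hp
  suffices h : (∑ d ∈ p.support, (monomial d (coeff d p) : MvPolynomial (Fin 2) k)) ∈ msp k by
    rwa [← as_sum p] at h
  apply Ideal.sum_mem
  intro d hd
  have hd0 : d ≠ 0 := by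
    rintro rfl
    exact (mem_support_iff.mp hd) hp0
  have : ∃ i : Fin 2, d i ≠ 0 := by
    by_contra h
    push_neg at h
    exact hd0 (Finsupp.ext fun i => h i)
  obtain ⟨i, hi⟩ := this
  have hle : Finsupp.single i 1 ≤ d := Finsupp.single_le_iff.mpr (by omega)
  have hsum : Finsupp.single i 1 + (d - Finsupp.single i 1) = d :=
    add_tsub_cancel_of_le hle
  have hXi : (X i : MvPolynomial (Fin 2) k) ∈ msp k := by
    apply Ideal.subset_span
    fin_cases i <;> simp
  have : (monomial d (coeff d p) : MvPolynomial (Fin 2) k)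
      = X i * monomial (d - Finsupp.single i 1) (coeff d p) := by
    conv_lhs => rw [← hsum]
    rw [monomial_single_add, pow_one, hsum]
  rw [this]
  exact Ideal.mul_mem_right _ _ hXi

lemma prod_mem_pow_card {ι : Type*} [DecidableEq ι] {P : Ideal (MvPolynomial (Fin 2) k)}
    (t : Finset ι) (f : ι → MvPolynomial (Fin 2) k) (h : ∀ i ∈ t, f i ∈ P) :
    (∏ i ∈ t, f i) ∈ P ^ t.card := by
  classical
  induction t using Finset.cons_induction with
  | empty => simp [Ideal.one_eq_top]
  | cons a s ha ih =>
    rw [Finset.prod_cons, Finset.card_cons, pow_succ']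
    exact Ideal.mul_mem_mul (h a (Finset.mem_cons_self a s))
      (ih fun i hi => h i (Finset.mem_cons.mpr (Or.inr hi)))

lemma cancel_of_not_mem_msp {J : Ideal (MvPolynomial (Fin 2) k)} {s : ℕ}
    (hs : (msp k) ^ s ≤ J) {P q : MvPolynomial (Fin 2) k}
    (hq : q ∉ msp k) (h : P * q ∈ J) : P ∈ J := by
  set c := constantCoeff q with hc_def
  have hc : c ≠ 0 := by
    intro h0
    exact hq (mem_msp_of_constantCoeff_zero h0)
  set h' : MvPolynomial (Fin 2) k := C c - q with hh'_def
  have hh' : h' ∈ msp k := by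
    apply mem_msp_of_constantCoeff_zero
    simp [hh'_def, hc_def]
  have hgeom : (∑ i ∈ Finset.range s, (C c : MvPolynomial (Fin 2) k) ^ i * h' ^ (s - 1 - i))
      * (C c - h') = (C c : MvPolynomial (Fin 2) k) ^ s - h' ^ s := geom_sum₂_mul _ _ s
  have hq_eq : (C c : MvPolynomial (Fin 2) k) - h' = q := by ring
  have h1 : P * ((C c : MvPolynomial (Fin 2) k) ^ s - h' ^ s) ∈ J := by
    rw [← hgeom, hq_eq]
    have heq : P * ((∑ i ∈ Finset.range s, (C c : MvPolynomial (Fin 2) k) ^ i * h' ^ (s - 1 - i)) * q)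
        = (∑ i ∈ Finset.range s, (C c : MvPolynomial (Fin 2) k) ^ i * h' ^ (s - 1 - i)) * (P * q)
          := by ring
    rw [heq]
    exact Ideal.mul_mem_left _ _ h
  have h2 : P * h' ^ s ∈ J :=
    Ideal.mul_mem_left _ _ (hs (Ideal.pow_mem_pow hh' s))
  have h3 : P * (C c : MvPolynomial (Fin 2) k) ^ s ∈ J := by
    have : P * ((C c : MvPolynomial (Fin 2) k) ^ s - h' ^ s) + P * h' ^ s
        = P * (C c : MvPolynomial (Fin 2) k) ^ s := by ring
    rw [← this]
    exact Ideal.add_mem _ h1 h2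
  have key : P = (C (c⁻¹) : MvPolynomial (Fin 2) k) ^ s * (P * (C c) ^ s) := by
    have hcc : ((C (c⁻¹) : MvPolynomial (Fin 2) k) * C c) ^ s = 1 := by
      rw [← C_mul, inv_mul_cancel₀ hc, C_1, one_pow]
    calc P = ((C (c⁻¹) : MvPolynomial (Fin 2) k) * C c) ^ s * P := by rw [hcc, one_mul]
      _ = (C (c⁻¹) : MvPolynomial (Fin 2) k) ^ s * (P * (C c) ^ s) := by ring
  rw [key]
  exact Ideal.mul_mem_left _ _ h3

lemma absorb_of_pow_le {J : Ideal (MvPolynomial (Fin 2) k)} {s : ℕ}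
    (hs : (msp k) ^ s ≤ J) : IsNAbsorbing J s := by
  intro x hx
  by_cases hall : ∀ j, x j ∈ msp k
  · refine ⟨0, ?_⟩
    apply hs
    have hcard : (Finset.univ.erase (0 : Fin (s+1))).card = s := by
      rw [Finset.card_erase_of_mem (Finset.mem_univ _), Finset.card_univ, Fintype.card_fin]
      omega
    have := prod_mem_pow_card (Finset.univ.erase (0 : Fin (s+1))) x
      (fun i _ => hall i)
    rwa [hcard] at this
  · push_neg at hall
    obtain ⟨j, hj⟩ := hall
    refine ⟨j, cancel_of_not_mem_msp hs hj ?_⟩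
    rw [Finset.prod_erase_mul Finset.univ x (Finset.mem_univ j)]
    exact hx

lemma X_pow_mul_X_pow (c d : ℕ) :
    (X 0 : MvPolynomial (Fin 2) k) ^ c * X 1 ^ d = mo (pair c d) := by
  rw [X_pow_eq_monomial, X_pow_eq_monomial]
  simp [mo, monomial_mul, pair]

lemma not_mem_span_mono {G : Set (Fin 2 →₀ ℕ)} {p : MvPolynomial (Fin 2) k} {u : Fin 2 →₀ ℕ}
    (hp : coeff u p ≠ 0) (hu : ∀ e ∈ G, ¬ e ≤ u) :
    p ∉ Ideal.span (mo '' G) := by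
  intro h
  have h' : p ∈ Ideal.span ((fun s => monomial s (1 : k)) '' G) := h
  obtain ⟨e, heG, heu⟩ := mem_ideal_span_monomial_image.mp h' u (mem_support_iff.mpr hp)
  exact hu e heG heu

lemma two_mono_not_mem {G : Set (Fin 2 →₀ ℕ)} {A B : Fin 2 →₀ ℕ} (hAB : A ≠ B)
    (hA : ∀ e ∈ G, ¬ e ≤ A) :
    (mo A + mo B : MvPolynomial (Fin 2) k) ∉ Ideal.span (mo '' G) := by
  apply not_mem_span_mono ?_ hA
  have : coeff A (mo A + mo B : MvPolynomial (Fin 2) k) = 1 := by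
    simp [mo, coeff_monomial, Ne.symm hAB]
  rw [this]
  exact one_ne_zero

lemma not_absorb {J : Ideal (MvPolynomial (Fin 2) k)} {G : Set (Fin 2 →₀ ℕ)}
    (hJ : J = Ideal.span (mo '' G)) {T : ℕ} (hT : (msp k) ^ (T + 1) ≤ J)
    {u : Fin 2 →₀ ℕ} (hdu : dg u = T) (hu : ∀ e ∈ G, ¬ e ≤ u)
    {N : ℕ} (hN : N ≤ T) : ¬ IsNAbsorbing J N := by
  intro habs
  set i := u 0 with hi_def
  set j := u 1 with hj_def
  have hij : i + j = T := hdu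
  have hu0 : u 0 = i := rfl
  have hu1 : u 1 = j := rfl
  clear_value i j
  set kk := min i N with hkk_def
  have hki : kk ≤ i := min_le_left _ _
  have hkN : kk ≤ N := min_le_right _ _
  have hNkj : N - kk ≤ j := by
    rcases min_choice i N with h | h
    · rw [hkk_def, h]; omega
    · rw [hkk_def, h]; omega
  clear_value kk
  clear hkk_def hi_def hj_def
  set w := pair (i - kk) (j - (N - kk)) with hw_def
  set L := (X 0 + X 1 : MvPolynomial (Fin 2) k) * mo w with hL_def
  set F : ℕ → MvPolynomial (Fin 2) k :=
    fun n => if n < kk then X 0 else if n < N then X 1 else L with hF_def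
  set v : Fin (N + 1) → MvPolynomial (Fin 2) k := fun t => F (t : ℕ) with hv_def
  clear_value w L F v
  -- the shape of products X0^c * X1^d * L
  have hQform : ∀ c d : ℕ, (X 0 : MvPolynomial (Fin 2) k) ^ c * X 1 ^ d * L
      = mo (pair 1 0 + (pair c d + w)) + mo (pair 0 1 + (pair c d + w)) := by
    intro c d
    rw [X_pow_mul_X_pow, hL_def]
    have : mo (pair c d) * ((X 0 + X 1 : MvPolynomial (Fin 2) k) * mo w)
        = X 0 * (mo (pair c d) * mo w) + X 1 * (mo (pair c d) * mo w) := by ring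
    rw [this, mo_mul, X0_eq_mo, X1_eq_mo, mo_mul, mo_mul]
  -- total product
  have hwu : pair kk (N - kk) + w = u := by
    apply fin2_ext
    · simp only [Finsupp.add_apply, pair_apply_zero, hw_def]
      rw [hu0]
      exact Nat.add_sub_cancel' hki
    · simp only [Finsupp.add_apply, pair_apply_one, hw_def]
      rw [hu1]
      exact Nat.add_sub_cancel' hNkj
  have hftot : (∏ t, v t) = (X 0 : MvPolynomial (Fin 2) k) ^ kk * X 1 ^ (N - kk) * L := by
    rw [hv_def]
    rw [Fin.prod_univ_eq_prod_range F (N + 1)]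
    rw [Finset.prod_range_succ]
    have hfN : F N = L := by
      rw [hF_def]
      simp only
      rw [if_neg (by omega), if_neg (by omega)]
    have hNsplit : N = kk + (N - kk) := by omega
    have hr : (∏ x ∈ Finset.range N, F x) = (∏ x ∈ Finset.range (kk + (N - kk)), F x) := by
      conv_lhs => rw [hNsplit]
    rw [hfN, hr, Finset.prod_range_add]
    have h1 : (∏ x ∈ Finset.range kk, F x) = X 0 ^ kk := by
      rw [Finset.prod_congr rfl (g := fun _ => (X 0 : MvPolynomial (Fin 2) k))
        (fun x hx => by
          rw [hF_def]; simp only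
          rw [if_pos (Finset.mem_range.mp hx)])]
      rw [Finset.prod_const, Finset.card_range]
    have h2 : (∏ x ∈ Finset.range (N - kk), F (kk + x)) = X 1 ^ (N - kk) := by
      rw [Finset.prod_congr rfl (g := fun _ => (X 1 : MvPolynomial (Fin 2) k))
        (fun x hx => by
          have hx' := Finset.mem_range.mp hx
          rw [hF_def]; simp only
          rw [if_neg (by omega), if_pos (by omega)])]
      rw [Finset.prod_const, Finset.card_range]
    rw [h1, h2]
  have htot2 : (∏ t, v t) = mo (pair 1 0 + u) + mo (pair 0 1 + u) := by
    rw [hftot, hQform kk (N - kk), hwu]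
  -- total product is in J
  have hprod_mem : (∏ t, v t) ∈ J := by
    rw [htot2]
    refine Ideal.add_mem _ (hT (mo_mem_msp_pow ?_)) (hT (mo_mem_msp_pow ?_)) <;>
      · rw [dg_add, dg_pair]
        omega
  obtain ⟨t₀, ht₀⟩ := habs v hprod_mem
  -- cancellation helper
  have hcancel : ∀ Q : MvPolynomial (Fin 2) k, v t₀ ≠ 0 → v t₀ * Q = (∏ t, v t) →
      (∏ t ∈ Finset.univ.erase t₀, v t) = Q := by
    intro Q hne hQ
    apply mul_left_cancel₀ hne
    rw [Finset.mul_prod_erase Finset.univ v (Finset.mem_univ t₀), hQ]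
  have hX0ne : (X 0 : MvPolynomial (Fin 2) k) ≠ 0 := X_ne_zero 0
  have hX1ne : (X 1 : MvPolynomial (Fin 2) k) ≠ 0 := X_ne_zero 1
  have hL2 : L = mo (pair 1 0 + w) + mo (pair 0 1 + w) := by
    rw [hL_def, add_mul, X0_eq_mo, X1_eq_mo, mo_mul, mo_mul]
  have hABw : pair 1 0 + w ≠ pair 0 1 + w := by
    intro h
    have := congrArg (fun d => d 0) h
    simp only [Finsupp.add_apply, pair_apply_zero] at this
    omega
  have hLne : L ≠ 0 := by
    rw [hL2]
    intro h0
    have h1 : coeff (pair 1 0 + w)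
        (mo (pair 1 0 + w) + mo (pair 0 1 + w) : MvPolynomial (Fin 2) k) = 1 := by
      simp [mo, coeff_monomial, Ne.symm hABw]
    rw [h0] at h1
    simp at h1
  rw [hJ] at ht₀
  rcases Nat.lt_or_ge (t₀ : ℕ) kk with hc | hc
  · -- erased an X 0 factor
    have hvt : v t₀ = X 0 := by
      simp only [hv_def, hF_def]
      rw [if_pos hc]
    have hQ : v t₀ * (X 0 ^ (kk - 1) * X 1 ^ (N - kk) * L) = ∏ t, v t := by
      rw [hvt, hftot]
      have hpow : (X 0 : MvPolynomial (Fin 2) k) * X 0 ^ (kk - 1) = X 0 ^ kk := by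
        rw [← pow_succ']
        congr 1
        omega
      calc (X 0 : MvPolynomial (Fin 2) k) * (X 0 ^ (kk - 1) * X 1 ^ (N - kk) * L)
          = (X 0 * X 0 ^ (kk - 1)) * X 1 ^ (N - kk) * L := by ring
        _ = X 0 ^ kk * X 1 ^ (N - kk) * L := by rw [hpow]
    have herase := hcancel _ (by rw [hvt]; exact hX0ne) hQ
    rw [herase, hQform (kk - 1) (N - kk)] at ht₀
    have hz1 : pair 1 0 + (pair (kk - 1) (N - kk) + w) = u := by
      apply fin2_ext
      · simp only [Finsupp.add_apply, pair_apply_zero, hw_def]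
        omega
      · simp only [Finsupp.add_apply, pair_apply_one, hw_def]
        omega
    rw [hz1] at ht₀
    have hne : u ≠ pair 0 1 + (pair (kk - 1) (N - kk) + w) := by
      intro h
      have := congrArg (fun d => d 0) h
      simp only [Finsupp.add_apply, pair_apply_zero, hw_def] at this
      omega
    exact two_mono_not_mem hne hu ht₀
  rcases Nat.lt_or_ge (t₀ : ℕ) N with hc2 | hc2
  · -- erased an X 1 factor
    have hvt : v t₀ = X 1 := by
      simp only [hv_def, hF_def]
      rw [if_neg (by omega), if_pos hc2]
    have hQ : v t₀ * (X 0 ^ kk * X 1 ^ (N - kk - 1) * L) = ∏ t, v t := by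
      rw [hvt, hftot]
      have hpow : (X 1 : MvPolynomial (Fin 2) k) * X 1 ^ (N - kk - 1) = X 1 ^ (N - kk) := by
        rw [← pow_succ']
        congr 1
        omega
      calc (X 1 : MvPolynomial (Fin 2) k) * (X 0 ^ kk * X 1 ^ (N - kk - 1) * L)
          = X 0 ^ kk * (X 1 * X 1 ^ (N - kk - 1)) * L := by ring
        _ = X 0 ^ kk * X 1 ^ (N - kk) * L := by rw [hpow]
    have herase := hcancel _ (by rw [hvt]; exact hX1ne) hQ
    rw [herase, hQform kk (N - kk - 1), add_comm] at ht₀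
    have hz1 : pair 0 1 + (pair kk (N - kk - 1) + w) = u := by
      apply fin2_ext
      · simp only [Finsupp.add_apply, pair_apply_zero, hw_def]
        omega
      · simp only [Finsupp.add_apply, pair_apply_one, hw_def]
        omega
    rw [hz1] at ht₀
    have hne : u ≠ pair 1 0 + (pair kk (N - kk - 1) + w) := by
      intro h
      have := congrArg (fun d => d 1) h
      simp only [Finsupp.add_apply, pair_apply_one, hw_def] at this
      omega
    exact two_mono_not_mem hne hu ht₀
  · -- erased the special factor L
    have hvt : v t₀ = L := by
      simp only [hv_def, hF_def]
      rw [if_neg (by omega), if_neg (by omega)]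
    have hQ : v t₀ * (X 0 ^ kk * X 1 ^ (N - kk)) = ∏ t, v t := by
      rw [hvt, hftot]
      ring
    have herase := hcancel _ (by rw [hvt]; exact hLne) hQ
    rw [herase, X_pow_mul_X_pow] at ht₀
    have hcoeff : coeff (pair kk (N - kk)) (mo (pair kk (N - kk)) : MvPolynomial (Fin 2) k)
        = 1 := by
      simp [mo, coeff_monomial]
    refine not_mem_span_mono (u := pair kk (N - kk)) (by rw [hcoeff]; exact one_ne_zero)
      (fun e heG hle => hu e heG (le_trans hle ?_)) ht₀
    rw [fin2_le]
    constructor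
    · simp only [pair_apply_zero]; omega
    · simp only [pair_apply_one]; omega

section Gs

variable {r : ℕ} (E : Fin (r + 1) → (Fin 2 →₀ ℕ))

/-- exponent sets of powers -/
def Gs : ℕ → Set (Fin 2 →₀ ℕ)
  | 0 => {0}
  | m + 1 => Gs m + Set.range E

lemma Ipow {I : Ideal (MvPolynomial (Fin 2) k)}
    (hI : I = Ideal.span (mo '' Set.range E)) (m : ℕ) :
    I ^ m = Ideal.span (mo '' Gs E m) := by
  induction m with
  | zero =>
    rw [pow_zero, Ideal.one_eq_top]
    have : (mo '' Gs E 0 : Set (MvPolynomial (Fin 2) k)) = {1} := by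
      show (mo '' {0} : Set (MvPolynomial (Fin 2) k)) = {1}
      simp [mo]
    rw [this, Ideal.span_singleton_one]
  | succ m ih =>
    rw [pow_succ, ih, hI, span_mono_mul]
    rfl

lemma mem_Gs_succ {e : Fin 2 →₀ ℕ} {m : ℕ} :
    e ∈ Gs E (m + 1) ↔ ∃ p ∈ Gs E m, ∃ i, e = p + E i := by
  show e ∈ Gs E m + Set.range E ↔ _
  rw [Set.mem_add]
  constructor
  · rintro ⟨p, hp, q, ⟨i, rfl⟩, rfl⟩
    exact ⟨p, hp, i, rfl⟩
  · rintro ⟨p, hp, i, rfl⟩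
    exact ⟨p, hp, E i, ⟨i, rfl⟩, rfl⟩

end Gs

section Main

variable {r : ℕ} (a b : Fin (r + 1) → ℕ)

/-- the exponent vector of the i-th generator -/
noncomputable def Ee : Fin (r + 1) → (Fin 2 →₀ ℕ) := fun i => pair (a i) (b i)

lemma Gs_y_zero (hb : StrictMono b) (hb1 : b 0 = 0) :
    ∀ m, ∀ e ∈ Gs (Ee a b) m, e 1 = 0 → m * a 0 ≤ e 0 := by
  intro m
  induction m with
  | zero =>
    rintro e rfl h
    · simp
  | succ m ih =>
    intro e he h1
    rw [mem_Gs_succ] at he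
    obtain ⟨p, hp, i, rfl⟩ := he
    have hEi1 : (Ee a b i) 1 = b i := by simp [Ee]
    have hEi0 : (Ee a b i) 0 = a i := by simp [Ee]
    rw [Finsupp.add_apply, hEi1] at h1
    have hbi : b i = 0 := by omega
    have hi0 : i = 0 := by
      by_contra hne
      have : b 0 < b i := hb (Fin.pos_of_ne_zero hne)
      omega
    have hp1 : p 1 = 0 := by omega
    have := ih p hp hp1
    rw [Finsupp.add_apply, hEi0, hi0]
    calc (m + 1) * a 0 = m * a 0 + a 0 := by ring
      _ ≤ p 0 + a 0 := by omega
      _ = p 0 + a 0 := rfl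

lemma Gs_x_zero (ha : StrictAnti a) (har : a (Fin.last r) = 0) :
    ∀ m, ∀ e ∈ Gs (Ee a b) m, e 0 = 0 → m * b (Fin.last r) ≤ e 1 := by
  intro m
  induction m with
  | zero =>
    rintro e rfl h
    · simp
  | succ m ih =>
    intro e he h1
    rw [mem_Gs_succ] at he
    obtain ⟨p, hp, i, rfl⟩ := he
    have hEi1 : (Ee a b i) 1 = b i := by simp [Ee]
    have hEi0 : (Ee a b i) 0 = a i := by simp [Ee]
    rw [Finsupp.add_apply, hEi0] at h1
    have hai : a i = 0 := by omega
    have hil : i = Fin.last r := by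
      by_contra hne
      have : a (Fin.last r) < a i := ha (Fin.lt_last_iff_ne_last.mpr hne)
      omega
    have hp0 : p 0 = 0 := by omega
    have := ih p hp hp0
    rw [Finsupp.add_apply, hEi1, hil]
    calc (m + 1) * b (Fin.last r) = m * b (Fin.last r) + b (Fin.last r) := by ring
      _ ≤ p 1 + b (Fin.last r) := by omega

lemma mono_mem_pow_of_big {I : Ideal (MvPolynomial (Fin 2) k)}
    (hI : I = Ideal.span (mo '' Set.range (Ee a b)))
    (hb1 : b 0 = 0) (har : a (Fin.last r) = 0)
    {M S : ℕ} (hMa : a 0 ≤ M) (hMb : b (Fin.last r) ≤ M) (hMS : M ≤ S)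
    (hS : (msp k) ^ S ≤ I) :
    ∀ n, ∀ d : Fin 2 →₀ ℕ, n * M + S ≤ dg d → mo d ∈ I ^ (n + 1) := by
  intro n
  induction n with
  | zero =>
    intro d hd
    rw [pow_one]
    exact hS (mo_mem_msp_pow (by omega))
  | succ n ih =>
    intro d hd
    have hlin : (n + 1) * M = n * M + M := by ring
    by_cases hca : a 0 ≤ d 0
    · have hE0le : Ee a b 0 ≤ d := by
        rw [fin2_le]
        constructor
        · simpa [Ee] using hca
        · simp [Ee, hb1]
      have hsum : Ee a b 0 + (d - Ee a b 0) = d := add_tsub_cancel_of_le hE0le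
      have hgen : mo (Ee a b 0) ∈ I := by
        rw [hI]
        exact Ideal.subset_span ⟨Ee a b 0, ⟨0, rfl⟩, rfl⟩
      have hdg : n * M + S ≤ dg (d - Ee a b 0) := by
        have h0 : (d - Ee a b 0) 0 = d 0 - a 0 := by
          simp [Finsupp.tsub_apply, Ee]
        have h1 : (d - Ee a b 0) 1 = d 1 := by
          simp [Finsupp.tsub_apply, Ee, hb1]
        simp only [dg] at hd ⊢
        rw [h0, h1]
        omega
      have hmul : (mo d : MvPolynomial (Fin 2) k) = mo (Ee a b 0) * mo (d - Ee a b 0) := by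
        rw [mo_mul, hsum]
      rw [hmul, pow_succ']
      exact Ideal.mul_mem_mul hgen (ih _ hdg)
    · by_cases hcb : b (Fin.last r) ≤ d 1
      · have hE0le : Ee a b (Fin.last r) ≤ d := by
          rw [fin2_le]
          constructor
          · simp [Ee, har]
          · simpa [Ee] using hcb
        have hsum : Ee a b (Fin.last r) + (d - Ee a b (Fin.last r)) = d :=
          add_tsub_cancel_of_le hE0le
        have hgen : mo (Ee a b (Fin.last r)) ∈ I := by
          rw [hI]
          exact Ideal.subset_span ⟨Ee a b (Fin.last r), ⟨Fin.last r, rfl⟩, rfl⟩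
        have hdg : n * M + S ≤ dg (d - Ee a b (Fin.last r)) := by
          have h0 : (d - Ee a b (Fin.last r)) 0 = d 0 := by
            simp [Finsupp.tsub_apply, Ee, har]
          have h1 : (d - Ee a b (Fin.last r)) 1 = d 1 - b (Fin.last r) := by
            simp [Finsupp.tsub_apply, Ee]
          simp only [dg] at hd ⊢
          rw [h0, h1]
          omega
        have hmul : (mo d : MvPolynomial (Fin 2) k)
            = mo (Ee a b (Fin.last r)) * mo (d - Ee a b (Fin.last r)) := by
          rw [mo_mul, hsum]
        rw [hmul, pow_succ']
        exact Ideal.mul_mem_mul hgen (ih _ hdg)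
      · exfalso
        simp only [dg] at hd
        omega

lemma msp_pow_le_Ipow {I : Ideal (MvPolynomial (Fin 2) k)}
    (hI : I = Ideal.span (mo '' Set.range (Ee a b)))
    (hb1 : b 0 = 0) (har : a (Fin.last r) = 0)
    {M S : ℕ} (hMa : a 0 ≤ M) (hMb : b (Fin.last r) ≤ M) (hMS : M ≤ S)
    (hS : (msp k) ^ S ≤ I) (n : ℕ) :
    (msp k) ^ (n * M + S) ≤ I ^ (n + 1) := by
  rw [msp_pow, Ideal.span_le]
  rintro p ⟨d, hd, rfl⟩
  exact mono_mem_pow_of_big a b hI hb1 har hMa hMb hMS hS n d (le_of_eq hd.symm)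

end Main

end OmegaScratch

open OmegaScratch in
theorem omegaLinear_tfae_two_vars {k : Type*} [Field k] (r : ℕ)
    (a b : Fin (r + 1) → ℕ) (ha : StrictAnti a) (hb : StrictMono b)
    (har : a (Fin.last r) = 0) (hb1 : b 0 = 0)
    (I : Ideal (MvPolynomial (Fin 2) k)) (hIp : I.IsPrimary)
    (hIr : I.radical = Ideal.span {(X 0 : MvPolynomial (Fin 2) k), X 1})
    (hI : I = Ideal.span (Set.range fun i =>
      (X 0 : MvPolynomial (Fin 2) k) ^ a i * (X 1 : MvPolynomial (Fin 2) k) ^ b i)) :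
    ((∀ m : ℕ, 1 ≤ m → omegaAbs (I ^ m) = m * omegaAbs I) ↔
      ∃ m : ℕ, 1 < m ∧ omegaAbs (I ^ m) = m * omegaAbs I) ∧
    ((∃ m : ℕ, 1 < m ∧ omegaAbs (I ^ m) = m * omegaAbs I) ↔
      omegaAbs I = max (a 0) (b (Fin.last r))) := by
  classical
  set E := Ee a b with hE_def
  set M := max (a 0) (b (Fin.last r)) with hM_def
  have hImono : I = Ideal.span (mo '' Set.range E) := by
    rw [hI, ← Set.range_comp]
    exact congrArg Ideal.span (congrArg Set.range (funext fun i => by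
      rw [X_pow_mul_X_pow]; rfl))
  have hIne : I ≠ ⊤ := (Ideal.isPrimary_iff.mp hIp).1
  have hr1 : 0 < r := by
    by_contra h
    have hr0 : r = 0 := by omega
    subst hr0
    have ha0 : a 0 = 0 := by simpa using har
    apply hIne
    rw [hI, Ideal.eq_top_iff_one]
    apply Ideal.subset_span
    exact ⟨0, by simp [ha0, hb1]⟩
  have hlast_pos : (0 : Fin (r + 1)) < Fin.last r := by
    rw [Fin.lt_def]
    simpa using hr1
  have ha0pos : 0 < a 0 := by
    have := ha hlast_pos
    omega
  have hbrpos : 0 < b (Fin.last r) := by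
    have := hb hlast_pos
    omega
  have hIpow : ∀ m, I ^ m = Ideal.span (mo '' Gs E m) := Ipow E hImono
  have hIle : I ≤ msp k := by
    have h1 : I ≤ I.radical := Ideal.le_radical
    rwa [hIr] at h1
  have hex : ∃ s, msp k ^ s ≤ I := by
    obtain ⟨n, hn⟩ := Ideal.exists_radical_pow_le_of_fg I (IsNoetherian.noetherian _)
    exact ⟨n, by rwa [hIr] at hn⟩
  set Sm : ℕ → ℕ := fun m => sInf {s | msp k ^ s ≤ I ^ m} with hSm_def
  have hSm_mem : ∀ m, msp k ^ (Sm m) ≤ I ^ m := by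
    intro m
    obtain ⟨s, hs⟩ := hex
    have hne : {s | msp k ^ s ≤ I ^ m}.Nonempty :=
      ⟨s * m, by rw [Set.mem_setOf_eq, pow_mul]; exact Ideal.pow_right_mono hs m⟩
    exact Nat.sInf_mem hne
  -- lower bounds for Sm
  have hSm_lba : ∀ m, 1 ≤ m → m * a 0 ≤ Sm m := by
    intro m hm
    by_contra hlt
    push_neg at hlt
    have hma : 1 ≤ m * a 0 := Nat.mul_pos hm ha0pos
    set d : Fin 2 →₀ ℕ := pair (m * a 0 - 1) 0 with hd_def
    have hdin : mo d ∈ I ^ m := by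
      apply hSm_mem m
      apply mo_mem_msp_pow
      rw [hd_def]
      rw [dg_pair]
      omega
    rw [hIpow m] at hdin
    have h' : mo d ∈ Ideal.span ((fun s => monomial s (1 : k)) '' Gs E m) := hdin
    obtain ⟨e, heG, hed⟩ := mem_ideal_span_monomial_image.mp h' d
      (by rw [mem_support_iff]; simp [mo, coeff_monomial])
    have he1 : e 1 = 0 := by
      have h2 := (fin2_le.mp hed).2
      rw [hd_def, pair_apply_one] at h2
      omega
    have hge := Gs_y_zero a b hb hb1 m e heG he1
    have he0 : e 0 ≤ m * a 0 - 1 := by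
      have h2 := (fin2_le.mp hed).1
      rwa [hd_def, pair_apply_zero] at h2
    omega
  have hSm_lbb : ∀ m, 1 ≤ m → m * b (Fin.last r) ≤ Sm m := by
    intro m hm
    by_contra hlt
    push_neg at hlt
    have hma : 1 ≤ m * b (Fin.last r) := Nat.mul_pos hm hbrpos
    set d : Fin 2 →₀ ℕ := pair 0 (m * b (Fin.last r) - 1) with hd_def
    have hdin : mo d ∈ I ^ m := by
      apply hSm_mem m
      apply mo_mem_msp_pow
      rw [hd_def, dg_pair]
      omega
    rw [hIpow m] at hdin
    have h' : mo d ∈ Ideal.span ((fun s => monomial s (1 : k)) '' Gs E m) := hdin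
    obtain ⟨e, heG, hed⟩ := mem_ideal_span_monomial_image.mp h' d
      (by rw [mem_support_iff]; simp [mo, coeff_monomial])
    have he0 : e 0 = 0 := by
      have h2 := (fin2_le.mp hed).1
      rw [hd_def, pair_apply_zero] at h2
      omega
    have hge := Gs_x_zero a b ha har m e heG he0
    have he1 : e 1 ≤ m * b (Fin.last r) - 1 := by
      have h2 := (fin2_le.mp hed).2
      rwa [hd_def, pair_apply_one] at h2
    omega
  have hS1 : msp k ^ (Sm 1) ≤ I := by
    have := hSm_mem 1
    rwa [pow_one] at this
  have hMS : M ≤ Sm 1 := by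
    have h1 := hSm_lba 1 le_rfl
    have h2 := hSm_lbb 1 le_rfl
    rw [one_mul] at h1 h2
    exact max_le h1 h2
  have hSm_ub : ∀ n : ℕ, Sm (n + 1) ≤ n * M + Sm 1 := by
    intro n
    exact Nat.sInf_le (show n * M + Sm 1 ∈ {s | msp k ^ s ≤ I ^ (n + 1)} from
      msp_pow_le_Ipow a b hImono hb1 har (le_max_left _ _) (le_max_right _ _) hMS hS1 n)
  have homega : ∀ m, 1 ≤ m → omegaAbs (I ^ m) = Sm m := by
    intro m hm
    have habs : IsNAbsorbing (I ^ m) (Sm m) := absorb_of_pow_le (hSm_mem m)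
    have hSmpos : 1 ≤ Sm m := by
      have h1 := hSm_lba m hm
      have h2 : 1 ≤ m * a 0 := Nat.mul_pos hm ha0pos
      omega
    have hnot : ¬ (msp k ^ (Sm m - 1) ≤ I ^ m) := by
      intro hcon
      have : Sm m ≤ Sm m - 1 :=
        Nat.sInf_le (show Sm m - 1 ∈ {s | msp k ^ s ≤ I ^ m} from hcon)
      omega
    have hmono : ∃ d : Fin 2 →₀ ℕ, dg d = Sm m - 1 ∧ mo d ∉ I ^ m := by
      by_contra hcon
      push_neg at hcon
      apply hnot
      rw [msp_pow, Ideal.span_le]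
      rintro p ⟨d, hd, rfl⟩
      exact hcon d hd
    obtain ⟨u, hdu, hunot⟩ := hmono
    have hu : ∀ e ∈ Gs E m, ¬ e ≤ u := by
      intro e heG hle'
      apply hunot
      rw [hIpow m]
      show mo u ∈ Ideal.span ((fun s => monomial s (1 : k)) '' Gs E m)
      apply mem_ideal_span_monomial_image.mpr
      intro xi hxi
      have hxiu : xi = u := by
        have : xi ∈ (mo u : MvPolynomial (Fin 2) k).support := hxi
        rw [mo, support_monomial] at this
        · simpa using this
      exact ⟨e, heG, hxiu ▸ hle'⟩
    apply le_antisymm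
    · exact Nat.sInf_le habs
    · by_contra hlt
      push_neg at hlt
      have hne : {N | IsNAbsorbing (I ^ m) N}.Nonempty := ⟨Sm m, habs⟩
      have hmem : IsNAbsorbing (I ^ m) (omegaAbs (I ^ m)) := Nat.sInf_mem hne
      have hT : msp k ^ (Sm m - 1 + 1) ≤ I ^ m := by
        have : Sm m - 1 + 1 = Sm m := by omega
        rw [this]
        exact hSm_mem m
      exact not_absorb (hIpow m) hT hdu hu (by omega) hmem
  have homegaI : omegaAbs I = Sm 1 := by
    have := homega 1 le_rfl
    rwa [pow_one] at this
  have main3 : Sm 1 = M → ∀ m, 1 ≤ m → omegaAbs (I ^ m) = m * omegaAbs I := by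
    intro hSM m hm
    obtain ⟨n, rfl⟩ : ∃ n, m = n + 1 := ⟨m - 1, by omega⟩
    rw [homega _ hm, homegaI, hSM]
    apply le_antisymm
    · have h1 := hSm_ub n
      rw [hSM] at h1
      calc Sm (n + 1) ≤ n * M + M := h1
        _ = (n + 1) * M := by ring
    · have h1 := hSm_lba (n + 1) hm
      have h2 := hSm_lbb (n + 1) hm
      rcases max_choice (a 0) (b (Fin.last r)) with h | h
      · calc (n + 1) * M = (n + 1) * a 0 := by rw [hM_def, h]
          _ ≤ Sm (n + 1) := h1
      · calc (n + 1) * M = (n + 1) * b (Fin.last r) := by rw [hM_def, h]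
          _ ≤ Sm (n + 1) := h2
  have main2 : (∃ m : ℕ, 1 < m ∧ omegaAbs (I ^ m) = m * omegaAbs I) → Sm 1 = M := by
    rintro ⟨m, hm1, hm⟩
    have hm' : 1 ≤ m := by omega
    rw [homega m hm', homegaI] at hm
    obtain ⟨n, rfl⟩ : ∃ n, m = n + 1 := ⟨m - 1, by omega⟩
    have hub := hSm_ub n
    rw [hm] at hub
    have hlin : (n + 1) * Sm 1 = n * Sm 1 + Sm 1 := by ring
    have hnS : n * Sm 1 ≤ n * M := by omega
    have hnpos : 0 < n := by omega
    have hSleM : Sm 1 ≤ M := Nat.le_of_mul_le_mul_left hnS hnpos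
    exact le_antisymm hSleM hMS
  constructor
  · constructor
    · intro h1
      exact ⟨2, one_lt_two, h1 2 (by norm_num)⟩
    · intro h2
      exact main3 (main2 h2)
  · constructor
    · intro h2
      rw [homegaI]
      exact main2 h2
    · intro h3
      have hSM : Sm 1 = M := by rw [← homegaI]; exact h3
      exact ⟨2, one_lt_two, main3 hSM 2 (by norm_num)⟩
end
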